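/- arXiv:0809.4554 — 5 statements merged into one kernel-verified Lean document; each statement's English description precedes it below -/
import Mathlib

section
/- The family of functions {x ↦ F(x,y) : y ∈ [0,∞)²} is measure determining on [0,∞)²: if μ and μ' are finite Borel measures on [0,∞)² such that ∫ F(x,y) μ(dx) = ∫ F(x,y) μ'(dx) for every y ∈ [0,∞)², then μ = μ'. -/
open MeasureTheory ProbabilityTheory Filter Set
open scoped ENNReal NNReal Topology

noncomputable section

/-- `E`, the boundary of the closed first quadrant: `([0,∞)×{0}) ∪ ({0}×[0,∞))`. -/
def Eset : Set (ℝ × ℝ) := {p | (0 ≤ p.1 ∧ p.2 = 0) ∨ (p.1 = 0 ∧ 0 ≤ p.2)}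

/-- The open first quadrant `(0,∞)²`. -/
def openQuad : Set (ℝ × ℝ) := {p | 0 < p.1 ∧ 0 < p.2}

/-- The closed first quadrant `[0,∞)²`. -/
def closedQuad : Set (ℝ × ℝ) := {p | 0 ≤ p.1 ∧ 0 ≤ p.2}

/-- Density of the harmonic measure `Q_(u,v)` on the horizontal part of `E`. -/
def qdensH (u v ubar : ℝ) : ℝ :=
  (4 / Real.pi) * (u * v * ubar) / (4 * u ^ 2 * v ^ 2 + (ubar ^ 2 + v ^ 2 - u ^ 2) ^ 2)

/-- Density of the harmonic measure `Q_(u,v)` on the vertical part of `E`. -/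
def qdensV (u v vbar : ℝ) : ℝ :=
  (4 / Real.pi) * (u * v * vbar) / (4 * u ^ 2 * v ^ 2 + (vbar ^ 2 + u ^ 2 - v ^ 2) ^ 2)

/-- The harmonic measure `Q_x` of planar Brownian motion in the first quadrant:
for `x` in the open quadrant it has the explicit densities on the two parts of `E`,
and `Q_x = δ_x` otherwise (in particular for `x ∈ E`). -/
def Qmeas (x : ℝ × ℝ) : Measure (ℝ × ℝ) :=
  if 0 < x.1 ∧ 0 < x.2 then
    (((volume.restrict (Ici (0 : ℝ))).withDensity fun ubar =>
        ENNReal.ofReal (qdensH x.1 x.2 ubar)).map fun ubar : ℝ => (ubar, (0 : ℝ)))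
      + (((volume.restrict (Ici (0 : ℝ))).withDensity fun vbar =>
        ENNReal.ofReal (qdensV x.1 x.2 vbar)).map fun vbar : ℝ => ((0 : ℝ), vbar))
  else Measure.dirac x

/-- The lozenge product `x ◊ y = −(x₁+x₂)(y₁+y₂) + i(x₁−x₂)(y₁−y₂)`. -/
def loz (x y : ℝ × ℝ) : ℂ :=
  -((((x.1 + x.2) * (y.1 + y.2) : ℝ)) : ℂ)
    + Complex.I * ((((x.1 - x.2) * (y.1 - y.2) : ℝ)) : ℂ)

/-- The self-duality function `F(x,y) = exp(x ◊ y)`. -/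
def Fdual (x y : ℝ × ℝ) : ℂ := Complex.exp (loz x y)

/-- The σ-finite measure `ν` on `E`, the vague limit of `ε⁻¹ Q_(1,ε)`. -/
def nuMeas : Measure (ℝ × ℝ) :=
  (((volume.restrict (Ici (0 : ℝ))).withDensity fun u =>
      ENNReal.ofReal ((4 / Real.pi) * u / ((1 - u) ^ 2 * (1 + u) ^ 2))).map
    fun u : ℝ => (u, (0 : ℝ)))
  + (((volume.restrict (Ici (0 : ℝ))).withDensity fun v =>
      ENNReal.ofReal ((4 / Real.pi) * v / (1 + v ^ 2) ^ 2)).map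
    fun v : ℝ => ((0 : ℝ), v))

/-- A planar Brownian motion started at `b`: continuous paths, `B 0 = b` a.s., the two
centered coordinate processes are independent, have independent increments
(each increment is independent of the past of the whole path), and Gaussian increments
`B i t − B i s ∼ N(0, t − s)`. -/
structure IsPlanarBM {Ω : Type*} [MeasurableSpace Ω] (P : Measure Ω)
    (B : ℝ → Ω → ℝ × ℝ) (b : ℝ × ℝ) : Prop where
  meas : ∀ t : ℝ, Measurable (B t)
  cont : ∀ ω, Continuous fun t => B t ω
  init : ∀ᵐ ω ∂P, B 0 ω = b
  indep_coords : IndepFun (fun ω => fun t : ℝ => (B t ω).1 - b.1)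
      (fun ω => fun t : ℝ => (B t ω).2 - b.2) P
  gauss_fst : ∀ s t : ℝ, 0 ≤ s → s ≤ t →
      P.map (fun ω => (B t ω).1 - (B s ω).1) = gaussianReal 0 (Real.toNNReal (t - s))
  gauss_snd : ∀ s t : ℝ, 0 ≤ s → s ≤ t →
      P.map (fun ω => (B t ω).2 - (B s ω).2) = gaussianReal 0 (Real.toNNReal (t - s))
  indepIncr_fst : ∀ s t : ℝ, 0 ≤ s → s ≤ t →
      IndepFun (fun ω => (B t ω).1 - (B s ω).1) (fun ω => fun r : ℝ => B (min r s) ω) P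
  indepIncr_snd : ∀ s t : ℝ, 0 ≤ s → s ≤ t →
      IndepFun (fun ω => (B t ω).2 - (B s ω).2) (fun ω => fun r : ℝ => B (min r s) ω) P

/-- The first positive time at which the path `f` leaves the set `S`
(`sInf ∅ = 0` by convention; the infimum is attained in `ℝ` whenever the set is nonempty). -/
def exitTime (f : ℝ → ℝ × ℝ) (S : Set (ℝ × ℝ)) : ℝ := sInf {t : ℝ | 0 < t ∧ f t ∉ S}

/-- The rectangular cone `[−z₁,∞) × [−z₂,∞)` northeast of `−z`. -/
def cone (z : ℝ × ℝ) : Set (ℝ × ℝ) := Ici (-z.1) ×ˢ Ici (-z.2)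

/-- Partial derivative `∂₁ f` along the horizontal axis (one-sided at `0`). -/
def d1 (f : ℝ × ℝ → ℂ) (u : ℝ) : ℂ := derivWithin (fun t : ℝ => f (t, 0)) (Ici 0) u

/-- Partial derivative `∂₂ f` along the vertical axis (one-sided at `0`). -/
def d2 (f : ℝ × ℝ → ℂ) (v : ℝ) : ℂ := derivWithin (fun t : ℝ => f (0, t)) (Ici 0) v

/-- The space `C_l(E)`: continuous on `E` with equal finite limits along both axes. -/
def MemCl (g : ℝ × ℝ → ℂ) : Prop :=
  ContinuousOn g Eset ∧ ∃ L : ℂ, Tendsto (fun u : ℝ => g (u, 0)) atTop (𝓝 L) ∧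
    Tendsto (fun v : ℝ => g (0, v)) atTop (𝓝 L)

/-- The space `C_l²(E)` of twice differentiable elements of `C_l(E)`. -/
structure MemCl2 (f : ℝ × ℝ → ℂ) : Prop where
  contOn : ContinuousOn f Eset
  limits : ∃ L : ℂ, Tendsto (fun u : ℝ => f (u, 0)) atTop (𝓝 L) ∧
      Tendsto (fun v : ℝ => f (0, v)) atTop (𝓝 L)
  diff1 : ∀ u : ℝ, 0 ≤ u → DifferentiableWithinAt ℝ (fun t : ℝ => f (t, 0)) (Ici 0) u
  diff2 : ∀ v : ℝ, 0 ≤ v → DifferentiableWithinAt ℝ (fun t : ℝ => f (0, t)) (Ici 0) v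
  contd1 : ContinuousOn (d1 f) (Ici 0)
  contd2 : ContinuousOn (d2 f) (Ici 0)
  decay1 : Tendsto (fun u : ℝ => (u : ℂ) * d1 f u) atTop (𝓝 0)
  decay2 : Tendsto (fun v : ℝ => (v : ℂ) * d2 f v) atTop (𝓝 0)
  diff11 : ∀ u : ℝ, 0 < u → DifferentiableAt ℝ (d1 f) u
  diff22 : ∀ v : ℝ, 0 < v → DifferentiableAt ℝ (d2 f) v
  bdd2 : ∃ C : ℝ, ∀ r : ℝ, 0 < r → r * (‖deriv (d1 f) r‖ + ‖deriv (d2 f) r‖) ≤ C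

/-- `f†(x₁,x₂) := f(x₂,x₁)`. -/
def swapF (f : ℝ × ℝ → ℂ) : ℝ × ℝ → ℂ := fun x => f (x.2, x.1)

/-- The operator `G₂` (generator part for a drift in direction `(0,1)`). -/
def G2op (f : ℝ × ℝ → ℂ) (x : ℝ × ℝ) : ℂ :=
  if x.1 = 0 then d2 f x.2
  else ((x.1 : ℂ))⁻¹ *
    ∫ y, (f (x.1 • y) - f x - (((x.1 * (y.1 - 1)) : ℝ) : ℂ) * d1 f x.1) ∂nuMeas

/-- The operator `G₁ f := (G₂ f†)†`. -/
def G1op (f : ℝ × ℝ → ℂ) (x : ℝ × ℝ) : ℂ := G2op (swapF f) (x.2, x.1)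

/-- The generator `G^{c,θ} f(x) = c(θ₁−x₁)G₁f(x) + c(θ₂−x₂)G₂f(x)`. -/
def Gop (c : ℝ) (θ : ℝ × ℝ) (f : ℝ × ℝ → ℂ) (x : ℝ × ℝ) : ℂ :=
  (((c * (θ.1 - x.1) : ℝ)) : ℂ) * G1op f x + (((c * (θ.2 - x.2) : ℝ)) : ℂ) * G2op f x

end

open MeasureTheory Filter Set
open scoped Topology

/-!
On the quadrant the functions `F(·, y)` are bounded by `1`, satisfy
`F(·, y + y') = F(·, y) F(·, y')` and `conj F(·, y) = F(·, (y₂, y₁))`, and separate points: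
`t ↦ F(x, (t, 0)) = exp (t · x◊(1,0))` determines `x◊(1,0) = -(x₁+x₂) + i(x₁-x₂)`, hence `x`.
So their linear span is a point-separating star subalgebra of bounded continuous functions on the
Polish space `ℝ≥0 × ℝ≥0`, and by Stone–Weierstrass such an algebra determines finite measures.
Measures carried by the quadrant are recovered from their images in `ℝ≥0 × ℝ≥0`.
-/

namespace StarAlgebra

open Submodule in
theorem adjoin_range_le_span {R A M : Type*} [CommSemiring R] [StarRing R] [Semiring A]
    [Algebra R A] [StarRing A] [StarModule R A] [Monoid M] (χ : M →* A)
    (hstar : ∀ m, star (χ m) ∈ Set.range χ) :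
    Subalgebra.toSubmodule (adjoin R (Set.range χ)).toSubalgebra ≤ span R (Set.range χ) := by
  have hclosure : (Submonoid.closure (Set.range χ ∪ star (Set.range χ)) : Set A) = Set.range χ := by
    rw [Set.union_eq_left.mpr, ← MonoidHom.coe_mrange, Submonoid.closure_eq]
    rintro a ⟨m, hm⟩
    rw [← star_star a, ← hm]
    exact hstar m
  rw [adjoin_eq_span, hclosure]

end StarAlgebra

open BoundedContinuousFunction

namespace MeasureTheory

theorem ext_of_forall_integral_eq_of_monoidHom {E M : Type*} [TopologicalSpace E] [PolishSpace E]
    [MeasurableSpace E] [BorelSpace E] [Monoid M] {P P' : Measure E}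
    [IsFiniteMeasure P] [IsFiniteMeasure P'] (χ : M →* (E →ᵇ ℂ))
    (hstar : ∀ m, star (χ m) ∈ Set.range χ) (hinj : ∀ x x', (∀ m, χ m x = χ m x') → x = x')
    (h : ∀ m, ∫ x, χ m x ∂P = ∫ x, χ m x ∂P') : P = P' := by
  refine ext_of_forall_mem_subalgebra_integral_eq_of_polish
    (A := StarAlgebra.adjoin ℂ (Set.range χ)) ?_ fun g hg => ?_
  · intro x x' hne
    obtain ⟨m, hm⟩ : ∃ m, χ m x ≠ χ m x' := by
      contrapose! hne
      exact hinj x x' hne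
    exact ⟨χ m, ⟨_, ⟨χ m, StarAlgebra.subset_adjoin ℂ _ ⟨m, rfl⟩, rfl⟩, rfl⟩, hm⟩
  · replace hg := StarAlgebra.adjoin_range_le_span χ hstar hg
    induction hg using Submodule.span_induction with
    | mem f hf =>
      obtain ⟨m, rfl⟩ := hf
      exact h m
    | zero => simp
    | add f g _ _ hf hg =>
      simp only [coe_add, Pi.add_apply]
      rw [integral_add (f.integrable P) (g.integrable P),
        integral_add (f.integrable P') (g.integrable P'), hf, hg]
    | smul c f _ hf =>
      simp only [coe_smul, smul_eq_mul, integral_const_mul, hf]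

end MeasureTheory

theorem Complex.eq_of_forall_nonneg_cexp_real_mul_eq {a b : ℂ}
    (h : ∀ t : ℝ, 0 ≤ t → Complex.exp (t * a) = Complex.exp (t * b)) : a = b := by
  have hderiv (c : ℂ) : HasDerivWithinAt (fun t : ℝ => Complex.exp (t * c)) c (Ici 0) 0 := by
    simpa using ((hasDerivAt_id (0 : ℝ)).ofReal_comp.mul_const c).cexp.hasDerivWithinAt
  exact (uniqueDiffWithinAt_Ici 0).eq_deriv _ (hderiv a)
    ((hderiv b).congr (fun t ht => h t ht) (h 0 le_rfl))

section Fdual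

lemma loz_add_right (x y y' : ℝ × ℝ) : loz x (y + y') = loz x y + loz x y' := by
  simp only [loz, Prod.fst_add, Prod.snd_add]
  push_cast
  ring

lemma loz_smul_right (x y : ℝ × ℝ) (t : ℝ) : loz x (t • y) = t * loz x y := by
  simp only [loz, Prod.smul_fst, Prod.smul_snd, smul_eq_mul]
  push_cast
  ring

lemma conj_loz (x y : ℝ × ℝ) : (starRingEnd ℂ) (loz x y) = loz x y.swap := by
  simp only [loz, map_add, map_neg, map_mul, Complex.conj_ofReal, Complex.conj_I, Prod.fst_swap,
    Prod.snd_swap]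
  push_cast
  ring

lemma re_loz (x y : ℝ × ℝ) : (loz x y).re = -((x.1 + x.2) * (y.1 + y.2)) := by
  simp [loz]

lemma im_loz (x y : ℝ × ℝ) : (loz x y).im = (x.1 - x.2) * (y.1 - y.2) := by
  simp [loz]

lemma Fdual_zero_right (x : ℝ × ℝ) : Fdual x 0 = 1 := by
  simp [Fdual, loz]

lemma Fdual_add_right (x y y' : ℝ × ℝ) : Fdual x (y + y') = Fdual x y * Fdual x y' := by
  rw [Fdual, loz_add_right, Complex.exp_add, Fdual, Fdual]

lemma star_Fdual (x y : ℝ × ℝ) : star (Fdual x y) = Fdual x y.swap := by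
  rw [Complex.star_def, Fdual, ← Complex.exp_conj, conj_loz, Fdual]

lemma norm_Fdual_le_one {x y : ℝ × ℝ} (hx : x ∈ closedQuad) (hy : y ∈ closedQuad) :
    ‖Fdual x y‖ ≤ 1 := by
  obtain ⟨hx₁, hx₂⟩ := hx
  obtain ⟨hy₁, hy₂⟩ := hy
  rw [Fdual, Complex.norm_exp, Real.exp_le_one_iff, re_loz, neg_nonpos]
  positivity

lemma continuous_Fdual_left (y : ℝ × ℝ) : Continuous fun x => Fdual x y := by
  unfold Fdual loz
  fun_prop

lemma eq_of_forall_Fdual_eq {x x' : ℝ × ℝ}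
    (h : ∀ t : ℝ, 0 ≤ t → Fdual x (t, 0) = Fdual x' (t, 0)) : x = x' := by
  have hloz (z : ℝ × ℝ) (t : ℝ) : loz z (t, 0) = t * loz z (1, 0) := by
    simpa using loz_smul_right z (1, 0) t
  have heq : loz x (1, 0) = loz x' (1, 0) :=
    Complex.eq_of_forall_nonneg_cexp_real_mul_eq fun t ht => by
      rw [← hloz, ← hloz]
      exact h t ht
  have hre := congrArg Complex.re heq
  have him := congrArg Complex.im heq
  rw [re_loz, re_loz] at hre
  rw [im_loz, im_loz] at him
  exact Prod.ext (by linarith) (by linarith)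

end Fdual

section Quadrant

def quadIncl (x : ℝ≥0 × ℝ≥0) : ℝ × ℝ := (x.1, x.2)

def quadProj (x : ℝ × ℝ) : ℝ≥0 × ℝ≥0 := (x.1.toNNReal, x.2.toNNReal)

lemma quadIncl_mem (x : ℝ≥0 × ℝ≥0) : quadIncl x ∈ closedQuad := ⟨x.1.2, x.2.2⟩

lemma quadIncl_zero : quadIncl 0 = 0 := rfl

lemma quadIncl_add (x y : ℝ≥0 × ℝ≥0) : quadIncl (x + y) = quadIncl x + quadIncl y := by
  ext <;> simp [quadIncl]

lemma quadIncl_swap (x : ℝ≥0 × ℝ≥0) : quadIncl x.swap = (quadIncl x).swap := rfl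

lemma quadIncl_injective : Function.Injective quadIncl :=
  fun _ _ h => Prod.ext (NNReal.coe_injective (congrArg Prod.fst h))
    (NNReal.coe_injective (congrArg Prod.snd h))

lemma quadIncl_quadProj {x : ℝ × ℝ} (hx : x ∈ closedQuad) : quadIncl (quadProj x) = x :=
  Prod.ext (Real.coe_toNNReal _ hx.1) (Real.coe_toNNReal _ hx.2)

lemma continuous_quadIncl : Continuous quadIncl := by
  unfold quadIncl; fun_prop

lemma continuous_quadProj : Continuous quadProj := by
  unfold quadProj; fun_prop

lemma map_quadIncl_map_quadProj {μ : Measure (ℝ × ℝ)} (hμ : μ closedQuadᶜ = 0) :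
    (μ.map quadProj).map quadIncl = μ := by
  rw [Measure.map_map continuous_quadIncl.measurable continuous_quadProj.measurable]
  conv_rhs => rw [← Measure.map_id (μ := μ)]
  refine Measure.map_congr ?_
  filter_upwards [mem_ae_iff.mpr hμ] with x hx using quadIncl_quadProj hx

end Quadrant

noncomputable def fdualChar (y : ℝ≥0 × ℝ≥0) : ℝ≥0 × ℝ≥0 →ᵇ ℂ :=
  .ofNormedAddCommGroup (fun x => Fdual (quadIncl x) (quadIncl y))
    ((continuous_Fdual_left _).comp continuous_quadIncl) 1
    fun x => norm_Fdual_le_one (quadIncl_mem x) (quadIncl_mem y)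

@[simp]
lemma fdualChar_apply (y x : ℝ≥0 × ℝ≥0) : fdualChar y x = Fdual (quadIncl x) (quadIncl y) := rfl

noncomputable def fdualCharHom : Multiplicative (ℝ≥0 × ℝ≥0) →* (ℝ≥0 × ℝ≥0 →ᵇ ℂ) where
  toFun y := fdualChar y.toAdd
  map_one' := by
    ext x
    simp [quadIncl_zero, Fdual_zero_right]
  map_mul' y y' := by
    ext x
    simp [quadIncl_add, Fdual_add_right]

lemma fdualCharHom_apply (y : Multiplicative (ℝ≥0 × ℝ≥0)) : fdualCharHom y = fdualChar y.toAdd :=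
  rfl

lemma star_fdualCharHom_mem_range (y : Multiplicative (ℝ≥0 × ℝ≥0)) :
    star (fdualCharHom y) ∈ Set.range fdualCharHom := by
  refine ⟨.ofAdd y.toAdd.swap, ?_⟩
  ext x
  simp [fdualCharHom_apply, quadIncl_swap, star_Fdual]

lemma eq_of_forall_fdualCharHom_eq {x x' : ℝ≥0 × ℝ≥0}
    (h : ∀ y, fdualCharHom y x = fdualCharHom y x') : x = x' := by
  refine quadIncl_injective (eq_of_forall_Fdual_eq fun t ht => ?_)
  simpa [fdualCharHom_apply, quadIncl, ht] using h (.ofAdd (t.toNNReal, 0))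

lemma integral_fdualChar_map_quadProj {μ : Measure (ℝ × ℝ)} (hμ : μ closedQuadᶜ = 0)
    (y : ℝ≥0 × ℝ≥0) : ∫ x, fdualChar y x ∂(μ.map quadProj) = ∫ x, Fdual x (quadIncl y) ∂μ := by
  rw [integral_map continuous_quadProj.aemeasurable (fdualChar y).continuous.aestronglyMeasurable]
  refine integral_congr_ae ?_
  filter_upwards [mem_ae_iff.mpr hμ] with x hx
  rw [fdualChar_apply, quadIncl_quadProj hx]

/-- the family `{x ↦ F(x,y) : y ∈ [0,∞)²}` is measure determining on `[0,∞)²`: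
two finite Borel measures on `[0,∞)²` with the same integrals of all these functions agree. -/
theorem Fdual_measure_determining (μ μ' : Measure (ℝ × ℝ))
    [IsFiniteMeasure μ] [IsFiniteMeasure μ']
    (hμ : μ closedQuadᶜ = 0) (hμ' : μ' closedQuadᶜ = 0)
    (h : ∀ y ∈ closedQuad, ∫ x, Fdual x y ∂μ = ∫ x, Fdual x y ∂μ') :
    μ = μ' := by
  have hmap : μ.map quadProj = μ'.map quadProj := by
    refine ext_of_forall_integral_eq_of_monoidHom fdualCharHom star_fdualCharHom_mem_range
      (fun x x' => eq_of_forall_fdualCharHom_eq) fun y => ?_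
    rw [fdualCharHom_apply, integral_fdualChar_map_quadProj hμ,
      integral_fdualChar_map_quadProj hμ']
    exact h _ (quadIncl_mem _)
  rw [← map_quadIncl_map_quadProj hμ, ← map_quadIncl_map_quadProj hμ', hmap]
end

section
/- For every bounded Borel measurable f : E → ℂ, every r ≥ 0 and every x ∈ [0,∞)², one has ∫_E f(r·z) Q_x(dz) = ∫_E f(z) Q_{r·x}(dz), where r·z denotes scalar multiplication in ℝ². -/
open MeasureTheory ProbabilityTheory Filter Set
open scoped ENNReal NNReal Topology

open MeasureTheory Filter Set
open scoped Topology

/-!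
For `r > 0` the densities of `Q_x` are jointly homogeneous of degree `-1` in `x` and the
integration variable, so the scaling `z ↦ r • z` pushes `Q_x` forward to `Q_(r • x)`; when `x` is
not in the open quadrant neither is `r • x`, and Dirac measures are pushed to Dirac measures.
For `r = 0` both sides equal `f 0` because `Q_x` is a probability measure:
`t ↦ arctan ((t² + v² - u²) / (2uv)) / π` is an antiderivative of the horizontal density, and the
masses of the two half-axes add up to `1` since `arctan` is odd.
-/

theorem MeasurableEquiv.map_withDensity {α β : Type*} [MeasurableSpace α] [MeasurableSpace β]
    (e : α ≃ᵐ β) (μ : Measure α) (φ : α → ℝ≥0∞) :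
    (μ.withDensity φ).map e = (μ.map e).withDensity (φ ∘ e.symm) := by
  ext s hs
  rw [e.map_apply, withDensity_apply _ (e.measurable hs), withDensity_apply _ hs,
    e.restrict_map, lintegral_map_equiv]
  simp

lemma map_mul_left_volume_restrict_Ici {r : ℝ} (hr : 0 < r) :
    (volume.restrict (Ici (0 : ℝ))).map (r * ·) =
      ENNReal.ofReal r⁻¹ • volume.restrict (Ici 0) := by
  have hpre : (r * ·) ⁻¹' Ici (0 : ℝ) = Ici 0 := by
    ext s
    simp [mul_nonneg_iff_of_pos_left hr]
  rw [← hpre, ← Measure.restrict_map (measurable_const_mul r) measurableSet_Ici,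
    Real.map_volume_mul_left hr.ne', Measure.restrict_smul, hpre, abs_of_pos (inv_pos.2 hr)]

lemma qdensH_mul_mul_mul {r : ℝ} (hr : r ≠ 0) (u v t : ℝ) :
    qdensH (r * u) (r * v) (r * t) = r⁻¹ * qdensH u v t := by
  unfold qdensH
  rw [show 4 * (r * u) ^ 2 * (r * v) ^ 2 + ((r * t) ^ 2 + (r * v) ^ 2 - (r * u) ^ 2) ^ 2
      = r ^ 4 * (4 * u ^ 2 * v ^ 2 + (t ^ 2 + v ^ 2 - u ^ 2) ^ 2) by ring,
    show r * u * (r * v) * (r * t) = r ^ 3 * (u * v * t) by ring]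
  generalize 4 * u ^ 2 * v ^ 2 + (t ^ 2 + v ^ 2 - u ^ 2) ^ 2 = D
  field_simp

lemma qdensV_eq_qdensH (u v : ℝ) : qdensV u v = qdensH v u := by
  ext t
  unfold qdensV qdensH
  ring_nf

lemma qdensH_nonneg {u v t : ℝ} (hu : 0 ≤ u) (hv : 0 ≤ v) (ht : 0 ≤ t) : 0 ≤ qdensH u v t := by
  have := Real.pi_pos
  unfold qdensH
  positivity

lemma hasDerivAt_arctan_qdensH {u v : ℝ} (hu : 0 < u) (hv : 0 < v) (t : ℝ) :
    HasDerivAt (fun t => Real.arctan ((t ^ 2 + v ^ 2 - u ^ 2) / (2 * u * v)) / Real.pi)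
      (qdensH u v t) t := by
  have hquot : HasDerivAt (fun t : ℝ => (t ^ 2 + v ^ 2 - u ^ 2) / (2 * u * v))
      (2 * t / (2 * u * v)) t := by
    simpa using
      (((hasDerivAt_pow 2 t).add_const (v ^ 2)).sub_const (u ^ 2)).div_const (2 * u * v)
  refine ((Real.hasDerivAt_arctan _).comp t hquot).div_const Real.pi |>.congr_deriv ?_
  have := Real.pi_pos
  unfold qdensH
  field_simp
  ring

lemma tendsto_arctan_qdensH_atTop {u v : ℝ} (hu : 0 < u) (hv : 0 < v) :
    Tendsto (fun t => Real.arctan ((t ^ 2 + v ^ 2 - u ^ 2) / (2 * u * v)) / Real.pi) atTop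
      (𝓝 (1 / 2)) := by
  have hquot : Tendsto (fun t : ℝ => (t ^ 2 + v ^ 2 - u ^ 2) / (2 * u * v)) atTop atTop := by
    refine Tendsto.atTop_div_const (by positivity) ?_
    simpa [add_sub_assoc] using tendsto_atTop_add_const_right atTop (v ^ 2 - u ^ 2)
      (tendsto_pow_atTop two_ne_zero)
  have := ((Real.tendsto_arctan_atTop.mono_right nhdsWithin_le_nhds).comp hquot).div_const Real.pi
  rw [div_div_cancel_left' Real.pi_ne_zero] at this
  simpa using this

lemma integral_Ioi_qdensH {u v : ℝ} (hu : 0 < u) (hv : 0 < v) :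
    ∫ t in Ioi 0, qdensH u v t =
      1 / 2 - Real.arctan ((v ^ 2 - u ^ 2) / (2 * u * v)) / Real.pi := by
  rw [integral_Ioi_of_hasDerivAt_of_nonneg' (fun t _ => hasDerivAt_arctan_qdensH hu hv t)
    (fun t ht => qdensH_nonneg hu.le hv.le (le_of_lt ht)) (tendsto_arctan_qdensH_atTop hu hv)]
  norm_num

noncomputable def qmeasH (u v : ℝ) : Measure ℝ :=
  (volume.restrict (Ici 0)).withDensity fun t => ENNReal.ofReal (qdensH u v t)

lemma qmeasH_univ {u v : ℝ} (hu : 0 < u) (hv : 0 < v) :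
    qmeasH u v univ =
      ENNReal.ofReal (1 / 2 - Real.arctan ((v ^ 2 - u ^ 2) / (2 * u * v)) / Real.pi) := by
  have hint : IntegrableOn (qdensH u v) (Ioi 0) :=
    integrableOn_Ioi_deriv_of_nonneg' (fun t _ => hasDerivAt_arctan_qdensH hu hv t)
      (fun t ht => qdensH_nonneg hu.le hv.le (le_of_lt ht)) (tendsto_arctan_qdensH_atTop hu hv)
  rw [qmeasH, withDensity_apply _ MeasurableSet.univ, Measure.restrict_univ,
    ← Measure.restrict_congr_set Ioi_ae_eq_Ici, ← integral_Ioi_qdensH hu hv,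
    ofReal_integral_eq_lintegral_ofReal hint
      ((ae_restrict_iff' measurableSet_Ioi).2 (ae_of_all _ fun t ht =>
        qdensH_nonneg hu.le hv.le (le_of_lt ht)))]

lemma qmeasH_univ_add_qmeasH_univ {u v : ℝ} (hu : 0 < u) (hv : 0 < v) :
    qmeasH u v univ + qmeasH v u univ = 1 := by
  have hnonneg (y : ℝ) : 0 ≤ 1 / 2 - Real.arctan y / Real.pi := by
    rw [sub_nonneg, div_le_iff₀ Real.pi_pos]
    linarith [Real.arctan_lt_pi_div_two y]
  rw [qmeasH_univ hu hv, qmeasH_univ hv hu, ← ENNReal.ofReal_add (hnonneg _) (hnonneg _),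
    show (u ^ 2 - v ^ 2) / (2 * v * u) = -((v ^ 2 - u ^ 2) / (2 * u * v)) by ring,
    Real.arctan_neg]
  norm_num
  ring

lemma qmeasH_map_mul {r : ℝ} (hr : 0 < r) (u v : ℝ) :
    (qmeasH u v).map (r * ·) = qmeasH (r * u) (r * v) := by
  let e : ℝ ≃ᵐ ℝ := (Homeomorph.mulLeft₀ r hr.ne').toMeasurableEquiv
  change (qmeasH u v).map e = _
  rw [qmeasH, e.map_withDensity, show ⇑e = (r * ·) from rfl,
    map_mul_left_volume_restrict_Ici hr, withDensity_smul_measure, qmeasH,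
    ← withDensity_smul' _ _ ENNReal.ofReal_ne_top]
  congr 1
  ext t
  simp only [Function.comp_apply, Pi.smul_apply, smul_eq_mul]
  rw [← ENNReal.ofReal_mul (inv_nonneg.2 hr.le), show e.symm t = r⁻¹ * t from rfl,
    ← qdensH_mul_mul_mul hr.ne', mul_inv_cancel_left₀ hr.ne']

lemma Qmeas_of_pos {x : ℝ × ℝ} (hx : 0 < x.1 ∧ 0 < x.2) :
    Qmeas x = (qmeasH x.1 x.2).map (·, 0) + (qmeasH x.2 x.1).map (0, ·) := by
  rw [Qmeas, if_pos hx, qdensV_eq_qdensH]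
  rfl

lemma Qmeas_of_not_pos {x : ℝ × ℝ} (hx : ¬(0 < x.1 ∧ 0 < x.2)) : Qmeas x = Measure.dirac x :=
  if_neg hx

instance isProbabilityMeasure_Qmeas (x : ℝ × ℝ) : IsProbabilityMeasure (Qmeas x) := by
  by_cases hx : 0 < x.1 ∧ 0 < x.2
  · constructor
    rw [Qmeas_of_pos hx, Measure.add_apply,
      Measure.map_apply measurable_prodMk_right MeasurableSet.univ,
      Measure.map_apply measurable_prodMk_left MeasurableSet.univ, preimage_univ, preimage_univ]
    exact qmeasH_univ_add_qmeasH_univ hx.1 hx.2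
  · rw [Qmeas_of_not_pos hx]
    infer_instance

lemma Qmeas_map_smul {r : ℝ} (hr : 0 < r) (x : ℝ × ℝ) :
    (Qmeas x).map (r • ·) = Qmeas (r • x) := by
  have hsmul : Measurable fun z : ℝ × ℝ => r • z := measurable_const_smul r
  by_cases hx : 0 < x.1 ∧ 0 < x.2
  · have hrx : 0 < (r • x).1 ∧ 0 < (r • x).2 := ⟨mul_pos hr hx.1, mul_pos hr hx.2⟩
    have hfst : (r • ·) ∘ (·, (0 : ℝ)) = (·, (0 : ℝ)) ∘ (r * ·) := by ext <;> simp
    have hsnd : (r • ·) ∘ ((0 : ℝ), ·) = ((0 : ℝ), ·) ∘ (r * ·) := by ext <;> simp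
    rw [Qmeas_of_pos hx, Qmeas_of_pos hrx, Measure.map_add _ _ hsmul,
      Measure.map_map hsmul measurable_prodMk_right, Measure.map_map hsmul measurable_prodMk_left,
      hfst, hsnd, ← Measure.map_map measurable_prodMk_right (measurable_const_mul r),
      ← Measure.map_map measurable_prodMk_left (measurable_const_mul r),
      qmeasH_map_mul hr, qmeasH_map_mul hr]
    rfl
  · have hrx : ¬(0 < (r • x).1 ∧ 0 < (r • x).2) := by
      simpa [mul_pos_iff_of_pos_left hr] using hx
    rw [Qmeas_of_not_pos hx, Qmeas_of_not_pos hrx, Measure.map_dirac' hsmul]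

theorem harmonic_measure_scaling_general (f : ℝ × ℝ → ℂ)
    (r : ℝ) (hr : 0 ≤ r) (x : ℝ × ℝ) :
    ∫ z, f (r • z) ∂(Qmeas x) = ∫ z, f z ∂(Qmeas (r • x)) := by
  rcases hr.eq_or_lt with rfl | hr
  · rw [zero_smul, Qmeas_of_not_pos (x := 0) (by simp), integral_dirac]
    simp
  · rw [← Qmeas_map_smul hr]
    exact ((Homeomorph.smulOfNeZero r hr.ne').measurableEmbedding.integral_map f).symm

/-- the scaling relation `∫_E f(r·z) Q_x(dz) = ∫_E f(z) Q_{r·x}(dz)` for every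
bounded Borel `f : E → ℂ`, `r ≥ 0` and `x ∈ [0,∞)²`. -/
theorem harmonic_measure_scaling (f : ℝ × ℝ → ℂ) (hf : Measurable f)
    (C : ℝ) (hfb : ∀ w, ‖f w‖ ≤ C)
    (r : ℝ) (hr : 0 ≤ r) (x : ℝ × ℝ) (hx : x ∈ closedQuad) :
    ∫ z, f (r • z) ∂(Qmeas x) = ∫ z, f z ∂(Qmeas (r • x)) :=
  harmonic_measure_scaling_general f r hr x
end

section
/- The map x ↦ Q_x is weakly continuous on [0,∞)²: if (x_n) is a sequence in [0,∞)² with x_n → x, then ∫_E f dQ_{x_n} → ∫_E f dQ_x for every bounded continuous function f : E → ℝ. -/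
open MeasureTheory ProbabilityTheory Filter Set
open scoped ENNReal NNReal Topology

open MeasureTheory Filter Set
open scoped Topology

/-!
Squaring `z ↦ z²` maps the open quadrant conformally onto the upper half-plane and `E`
bijectively onto `ℝ`, with inverse `boundarySqrt`. By conformal invariance, `Q_x` is the image
under `boundarySqrt` of the harmonic measure of the upper half-plane seen from
`x² = (x₁² - x₂²) + i·2x₁x₂`, i.e. of the Cauchy law with location `x₁² - x₂²` and scale `2x₁x₂`;
concretely this is the substitution `y = ū²` (resp. `y = -v̄²`) in the two densities. On the
boundary of the quadrant the scale vanishes and both measures are `δ_x`. Writing the Cauchy law as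
the image of the standard one under `t ↦ (x₁² - x₂²) + 2x₁x₂ t`, `∫ f dQ_x` becomes the integral of
`f (boundarySqrt ((x₁² - x₂²) + 2x₁x₂ t))` against a fixed probability measure; the integrand is
bounded by `C` and continuous in `x`, so dominated convergence concludes.
-/

open Real

lemma injOn_sq_Ici : InjOn (fun s : ℝ => s ^ 2) (Ici 0) :=
  fun _ ha _ hb h => (pow_left_inj₀ ha hb two_ne_zero).1 h

lemma lintegral_Ici_eq_lintegral_sq (g : ℝ → ℝ≥0∞) :
    ∫⁻ y in Ici 0, g y = ∫⁻ s in Ici 0, ENNReal.ofReal (2 * s) * g (s ^ 2) := by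
  have himage : (fun s : ℝ => s ^ 2) '' Ici 0 = Ici 0 :=
    (image_subset_iff.2 fun s _ => sq_nonneg s).antisymm fun y hy =>
      ⟨√y, sqrt_nonneg y, sq_sqrt hy⟩
  conv_lhs => rw [← himage]
  rw [lintegral_image_eq_lintegral_abs_deriv_mul measurableSet_Ici
    (fun s _ => (hasDerivAt_pow 2 s).hasDerivWithinAt) injOn_sq_Ici]
  refine setLIntegral_congr_fun measurableSet_Ici fun s hs => ?_
  simp [abs_of_nonneg (show (0:ℝ) ≤ s from hs)]

lemma lintegral_Iic_eq_lintegral_neg_sq (g : ℝ → ℝ≥0∞) :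
    ∫⁻ y in Iic 0, g y = ∫⁻ s in Ici 0, ENNReal.ofReal (2 * s) * g (-s ^ 2) := by
  have himage : (fun s : ℝ => -s ^ 2) '' Ici 0 = Iic 0 :=
    (image_subset_iff.2 fun s _ => neg_nonpos.2 (sq_nonneg s)).antisymm fun y hy =>
      ⟨√(-y), sqrt_nonneg _, by simp [sq_sqrt (neg_nonneg.2 hy)]⟩
  conv_lhs => rw [← himage]
  rw [lintegral_image_eq_lintegral_abs_deriv_mul measurableSet_Ici
    (fun s _ => (hasDerivAt_pow 2 s).fun_neg.hasDerivWithinAt)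
    (fun a ha b hb h => injOn_sq_Ici ha hb (neg_inj.1 h))]
  refine setLIntegral_congr_fun measurableSet_Ici fun s hs => ?_
  simp [abs_of_nonneg (show (0:ℝ) ≤ s from hs)]

lemma integral_map_of_continuousOn {α β E : Type*} [MeasurableSpace α] [TopologicalSpace β]
    [MeasurableSpace β] [OpensMeasurableSpace β] [NormedAddCommGroup E] [NormedSpace ℝ E]
    [SecondCountableTopologyEither β E] {μ : Measure α} {φ : α → β} {s : Set β} {f : β → E}
    (hφ : Measurable φ) (hφs : ∀ a, φ a ∈ s) (hs : MeasurableSet s) (hf : ContinuousOn f s) :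
    ∫ b, f b ∂μ.map φ = ∫ a, f (φ a) ∂μ := by
  have hrestrict : (μ.map φ).restrict s = μ.map φ :=
    Measure.restrict_eq_self_of_ae_mem ((ae_map_iff hφ.aemeasurable hs).2 (ae_of_all _ hφs))
  exact integral_map hφ.aemeasurable (hrestrict ▸ hf.aestronglyMeasurable hs)

lemma coe_mul_cauchyPDF_add_mul (x₀ : ℝ) {γ : ℝ≥0} (hγ : γ ≠ 0) (t : ℝ) :
    (γ : ℝ≥0∞) * cauchyPDF x₀ γ (x₀ + γ * t) = cauchyPDF 0 1 t := by
  rw [cauchyPDF, cauchyPDF, ← ENNReal.ofReal_coe_nnreal, ← ENNReal.ofReal_mul γ.coe_nonneg,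
    cauchyPDFReal, cauchyPDFReal]
  congr 1
  field_simp
  push_cast
  ring

lemma cauchyMeasure_eq_map_affine (x₀ : ℝ) (γ : ℝ≥0) :
    cauchyMeasure x₀ γ = (cauchyMeasure 0 1).map (fun t => x₀ + γ * t) := by
  rcases eq_or_ne γ 0 with rfl | hγ
  · simp [Measure.map_const]
  have hγ' : (γ : ℝ) ≠ 0 := NNReal.coe_ne_zero.2 hγ
  have himage : (fun t : ℝ => x₀ + γ * t) '' univ = univ :=
    image_univ_of_surjective fun y => ⟨(y - x₀) / γ, by field_simp; ring⟩
  refine Measure.ext_of_lintegral _ fun g hg => ?_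
  rw [lintegral_map hg (by fun_prop), cauchyMeasure_of_scale_ne_zero _ hγ,
    cauchyMeasure_of_scale_ne_zero _ one_ne_zero,
    lintegral_withDensity_eq_lintegral_mul _ (measurable_cauchyPDF _ _) hg,
    lintegral_withDensity_eq_lintegral_mul _ (measurable_cauchyPDF _ _) (by fun_prop),
    ← setLIntegral_univ, ← himage, lintegral_image_eq_lintegral_abs_deriv_mul MeasurableSet.univ
      (fun t _ => (((hasDerivAt_id' t).const_mul (γ : ℝ)).const_add x₀).hasDerivWithinAt)
      (fun a _ b _ h => mul_left_cancel₀ hγ' (add_left_cancel h)), setLIntegral_univ]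
  simp only [Pi.mul_apply, mul_one, NNReal.abs_eq, ENNReal.ofReal_coe_nnreal, ← mul_assoc,
    coe_mul_cauchyPDF_add_mul x₀ hγ]

lemma measurableSet_Eset : MeasurableSet Eset := by
  unfold Eset; measurability

noncomputable def boundarySqrt (y : ℝ) : ℝ × ℝ := (√y, √(-y))

@[fun_prop]
lemma continuous_boundarySqrt : Continuous boundarySqrt := by
  unfold boundarySqrt; fun_prop

lemma boundarySqrt_mem_Eset (y : ℝ) : boundarySqrt y ∈ Eset := by
  rcases le_total 0 y with hy | hy
  · exact Or.inl ⟨sqrt_nonneg _, sqrt_eq_zero_of_nonpos (neg_nonpos.2 hy)⟩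
  · exact Or.inr ⟨sqrt_eq_zero_of_nonpos hy, sqrt_nonneg _⟩

lemma boundarySqrt_sq {s : ℝ} (hs : 0 ≤ s) : boundarySqrt (s ^ 2) = (s, 0) := by
  simp [boundarySqrt, sqrt_sq hs, sqrt_eq_zero_of_nonpos (neg_nonpos.2 (sq_nonneg s))]

lemma boundarySqrt_neg_sq {s : ℝ} (hs : 0 ≤ s) : boundarySqrt (-s ^ 2) = (0, s) := by
  simp [boundarySqrt, sqrt_sq hs, sqrt_eq_zero_of_nonpos (neg_nonpos.2 (sq_nonneg s))]

lemma boundarySqrt_sq_sub_sq {z : ℝ × ℝ} (hz : z ∈ Eset) :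
    boundarySqrt (z.1 ^ 2 - z.2 ^ 2) = z := by
  obtain ⟨u, v⟩ := z
  rcases hz with ⟨hu, rfl : v = 0⟩ | ⟨rfl : u = 0, hv⟩
  · simpa using boundarySqrt_sq hu
  · simpa using boundarySqrt_neg_sq hv

lemma qdensH_eq_mul_cauchyPDFReal {u v : ℝ} (huv : 0 ≤ u * v) (s : ℝ) :
    qdensH u v s = 2 * s * cauchyPDFReal (u ^ 2 - v ^ 2) (2 * u * v).toNNReal (s ^ 2) := by
  rw [qdensH, cauchyPDFReal, Real.coe_toNNReal _ (by linarith)]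
  field_simp
  ring

lemma qdensV_eq_mul_cauchyPDFReal {u v : ℝ} (huv : 0 ≤ u * v) (s : ℝ) :
    qdensV u v s = 2 * s * cauchyPDFReal (u ^ 2 - v ^ 2) (2 * u * v).toNNReal (-s ^ 2) := by
  rw [qdensV, cauchyPDFReal, Real.coe_toNNReal _ (by linarith)]
  field_simp
  ring

lemma lintegral_Qmeas_of_pos {u v : ℝ} (hu : 0 < u) (hv : 0 < v) {g : ℝ × ℝ → ℝ≥0∞}
    (hg : Measurable g) :
    ∫⁻ z, g z ∂Qmeas (u, v) =
      ∫⁻ y, g (boundarySqrt y) ∂cauchyMeasure (u ^ 2 - v ^ 2) (2 * u * v).toNNReal := by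
  have huv : 0 ≤ u * v := by positivity
  have hγ : (2 * u * v).toNNReal ≠ 0 := (Real.toNNReal_pos.2 (by positivity)).ne'
  symm
  rw [cauchyMeasure_of_scale_ne_zero _ hγ,
    lintegral_withDensity_eq_lintegral_mul _ (measurable_cauchyPDF _ _)
      (show Measurable fun y => g (boundarySqrt y) by fun_prop),
    ← lintegral_add_compl _ measurableSet_Ici, compl_Ici, setLIntegral_congr Iio_ae_eq_Iic,
    lintegral_Ici_eq_lintegral_sq, lintegral_Iic_eq_lintegral_neg_sq,
    Qmeas, if_pos ⟨hu, hv⟩, lintegral_add_measure,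
    lintegral_map hg (by fun_prop), lintegral_map hg (by fun_prop),
    lintegral_withDensity_eq_lintegral_mul _ (by unfold qdensH; fun_prop) (by fun_prop),
    lintegral_withDensity_eq_lintegral_mul _ (by unfold qdensV; fun_prop) (by fun_prop)]
  congr 1 <;> refine setLIntegral_congr_fun measurableSet_Ici fun s (hs : 0 ≤ s) => ?_
  · simp only [Pi.mul_apply]
    rw [qdensH_eq_mul_cauchyPDFReal huv, ENNReal.ofReal_mul (by positivity : (0:ℝ) ≤ 2 * s),
      boundarySqrt_sq hs, cauchyPDF]
    exact (mul_assoc _ _ _).symm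
  · simp only [Pi.mul_apply]
    rw [qdensV_eq_mul_cauchyPDFReal huv, ENNReal.ofReal_mul (by positivity : (0:ℝ) ≤ 2 * s),
      boundarySqrt_neg_sq hs, cauchyPDF]
    exact (mul_assoc _ _ _).symm

lemma Qmeas_eq_map_cauchyMeasure {x : ℝ × ℝ} (hx : x ∈ closedQuad) :
    Qmeas x = (cauchyMeasure (x.1 ^ 2 - x.2 ^ 2) (2 * x.1 * x.2).toNNReal).map boundarySqrt := by
  obtain ⟨u, v⟩ := x
  by_cases hpos : 0 < u ∧ 0 < v
  · refine Measure.ext_of_lintegral _ fun g hg => ?_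
    rw [lintegral_map hg continuous_boundarySqrt.measurable,
      lintegral_Qmeas_of_pos hpos.1 hpos.2 hg]
  · have huv : u = 0 ∨ v = 0 := by
      rcases not_and_or.1 hpos with h | h
      · exact Or.inl (le_antisymm (not_lt.1 h) hx.1)
      · exact Or.inr (le_antisymm (not_lt.1 h) hx.2)
    have hE : (u, v) ∈ Eset := by
      rcases huv with rfl | rfl
      · exact Or.inr ⟨rfl, hx.2⟩
      · exact Or.inl ⟨hx.1, rfl⟩
    have hγ : (2 * u * v).toNNReal = 0 := by rcases huv with rfl | rfl <;> simp
    rw [Qmeas, if_neg hpos, hγ, cauchyMeasure_zero_scale,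
      Measure.map_dirac' continuous_boundarySqrt.measurable, boundarySqrt_sq_sub_sq hE]

lemma integral_Qmeas_eq_integral_cauchyMeasure {x : ℝ × ℝ} (hx : x ∈ closedQuad)
    {f : ℝ × ℝ → ℝ} (hf : ContinuousOn f Eset) :
    ∫ z, f z ∂Qmeas x =
      ∫ t, f (boundarySqrt (x.1 ^ 2 - x.2 ^ 2 + 2 * x.1 * x.2 * t)) ∂cauchyMeasure 0 1 := by
  have hγ : ((2 * x.1 * x.2).toNNReal : ℝ) = 2 * x.1 * x.2 :=
    Real.coe_toNNReal _ (mul_nonneg (mul_nonneg zero_le_two hx.1) hx.2)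
  rw [Qmeas_eq_map_cauchyMeasure hx, cauchyMeasure_eq_map_affine,
    Measure.map_map continuous_boundarySqrt.measurable (by fun_prop),
    integral_map_of_continuousOn (continuous_boundarySqrt.measurable.comp (by fun_prop))
      (fun _ => boundarySqrt_mem_Eset _) measurableSet_Eset hf]
  simp only [Function.comp, hγ]

/-- weak continuity of `x ↦ Q_x` on `[0,∞)²`: if `x_n → x` in `[0,∞)²` then
`∫_E f dQ_{x_n} → ∫_E f dQ_x` for every bounded continuous `f : E → ℝ`. -/
theorem harmonic_measure_weak_continuity (x : ℕ → ℝ × ℝ) (x₀ : ℝ × ℝ)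
    (hx : ∀ n, x n ∈ closedQuad) (hx₀ : x₀ ∈ closedQuad)
    (hlim : Tendsto x atTop (𝓝 x₀))
    (f : ℝ × ℝ → ℝ) (hf : ContinuousOn f Eset) (C : ℝ) (hfb : ∀ w ∈ Eset, |f w| ≤ C) :
    Tendsto (fun n => ∫ z, f z ∂(Qmeas (x n))) atTop (𝓝 (∫ z, f z ∂(Qmeas x₀))) := by
  have hg : Continuous (f ∘ boundarySqrt) :=
    hf.comp_continuous continuous_boundarySqrt boundarySqrt_mem_Eset
  simp_rw [integral_Qmeas_eq_integral_cauchyMeasure (hx _) hf,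
    integral_Qmeas_eq_integral_cauchyMeasure hx₀ hf]
  refine tendsto_integral_of_dominated_convergence (fun _ => C)
    (fun n => (hg.comp (by fun_prop)).aestronglyMeasurable) (integrable_const C)
    (fun n => ae_of_all _ fun t => hfb _ (boundarySqrt_mem_Eset _))
    (ae_of_all _ fun t => ?_)
  have hparam : Continuous fun p : ℝ × ℝ => p.1 ^ 2 - p.2 ^ 2 + 2 * p.1 * p.2 * t := by fun_prop
  exact ((hg.comp hparam).tendsto x₀).comp hlim
end

section
/- The rescaled harmonic measures ε^{−1} Q_{(1,ε)} converge vaguely, as ε ↓ 0, to the measure ν on E ∖ {(1,0)}: for every continuous function f : E → ℝ with compact support contained in E ∖ {(1,0)}, lim_{ε↓0} ε^{−1} ∫_E f dQ_{(1,ε)} = ∫_E f dν. -/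
open MeasureTheory ProbabilityTheory Filter Set
open scoped ENNReal NNReal Topology

/-! For `ε > 0` the measure `ε⁻¹ Q_(1,ε)` has the densities
`(4/π) u / (4ε² + (u² + ε² - 1)²)` and `(4/π) v / (4ε² + (v² + 1 - ε²)²)` on the two
half-axes, and at `ε = 0` these are exactly the densities of `ν`. Jointly in `(ε, u)` the
kernels are continuous away from `ε = 0, u = 1`, a point near which `f` vanishes, so the
integrals of `f` against them depend continuously on `ε`, including at `ε = 0` (a parametric
integral of a jointly continuous, uniformly compactly supported integrand). -/

open MeasureTheory Filter Set Function Real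
open scoped Topology

section ParametricIntegral

variable {X Y : Type*} [TopologicalSpace X] [TopologicalSpace Y]
  {k : X → Y → ℝ} {g : Y → ℝ} {U : Set (X × Y)}

theorem continuous_mul_of_continuousOn_of_tsupport (hU : IsOpen U) (hk : ContinuousOn (uncurry k) U)
    (hg : Continuous g) (hgU : ∀ x, ∀ y ∈ tsupport g, (x, y) ∈ U) :
    Continuous fun p : X × Y => k p.1 p.2 * g p.2 :=
  (hk.mul (hg.comp continuous_snd).continuousOn).continuous_of_tsupport_subset hU <|
    tsupport_mul_subset_right.trans fun p hp =>
      hgU p.1 p.2 (tsupport_comp_subset_preimage g continuous_snd hp)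

variable [MeasurableSpace Y] [OpensMeasurableSpace Y] (μ : Measure Y)
  [IsFiniteMeasureOnCompacts μ]

theorem integrable_mul_of_continuousOn_of_tsupport (hU : IsOpen U)
    (hk : ContinuousOn (uncurry k) U) (hg : Continuous g) (hgc : HasCompactSupport g)
    (hgU : ∀ x, ∀ y ∈ tsupport g, (x, y) ∈ U) (x : X) :
    Integrable (fun y => k x y * g y) μ :=
  ((continuous_mul_of_continuousOn_of_tsupport hU hk hg hgU).comp
    (continuous_const.prodMk continuous_id)).integrable_of_hasCompactSupport hgc.mul_left

theorem continuous_integral_mul_of_continuousOn_of_tsupport (hU : IsOpen U)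
    (hk : ContinuousOn (uncurry k) U) (hg : Continuous g) (hgc : HasCompactSupport g)
    (hgU : ∀ x, ∀ y ∈ tsupport g, (x, y) ∈ U) :
    Continuous fun x => ∫ y, k x y * g y ∂μ := by
  refine continuousOn_univ.1 <| continuousOn_integral_of_compact_support hgc
    (continuous_mul_of_continuousOn_of_tsupport hU hk hg hgU).continuousOn fun _ y _ hy => ?_
  simp [image_eq_zero_of_notMem_tsupport hy]

end ParametricIntegral

section CompactSupport

variable {X Y M : Type*} [TopologicalSpace X] [TopologicalSpace Y] [Zero M] {f : X × Y → M}

theorem HasCompactSupport.comp_prodMkLeft [T2Space X] (hf : HasCompactSupport f) (y : Y) :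
    HasCompactSupport fun x => f (x, y) :=
  .intro (hf.image continuous_fst) fun _ hx =>
    image_eq_zero_of_notMem_tsupport fun h => hx ⟨_, h, rfl⟩

theorem HasCompactSupport.comp_prodMkRight [T2Space Y] (hf : HasCompactSupport f) (x : X) :
    HasCompactSupport fun y => f (x, y) :=
  .intro (hf.image continuous_snd) fun _ hy =>
    image_eq_zero_of_notMem_tsupport fun h => hy ⟨_, h, rfl⟩

end CompactSupport

section WithDensity

variable {α β E : Type*} [MeasurableSpace α] [MeasurableSpace β] [NormedAddCommGroup E]
  [NormedSpace ℝ E] {μ : Measure α} {g : α → ℝ} {φ : α → β} {f : β → E}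

theorem integral_map_withDensity_ofReal (hg : Measurable g) (hg0 : 0 ≤ᵐ[μ] g)
    (hφ : Measurable φ) (hf : StronglyMeasurable f) :
    ∫ z, f z ∂(μ.withDensity fun x => ENNReal.ofReal (g x)).map φ =
      ∫ x, g x • f (φ x) ∂μ := by
  rw [integral_map hφ.aemeasurable hf.aestronglyMeasurable,
    integral_withDensity_eq_integral_toReal_smul hg.ennreal_ofReal
      (ae_of_all _ fun _ => ENNReal.ofReal_lt_top)]
  refine integral_congr_ae ?_
  filter_upwards [hg0] with x hx
  rw [ENNReal.toReal_ofReal hx]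

theorem integrable_map_withDensity_ofReal_iff (hg : Measurable g) (hg0 : 0 ≤ᵐ[μ] g)
    (hφ : Measurable φ) (hf : StronglyMeasurable f) :
    Integrable f ((μ.withDensity fun x => ENNReal.ofReal (g x)).map φ) ↔
      Integrable (fun x => g x • f (φ x)) μ := by
  rw [integrable_map_measure hf.aestronglyMeasurable hφ.aemeasurable,
    integrable_withDensity_iff_integrable_smul' hg.ennreal_ofReal
      (ae_of_all _ fun _ => ENNReal.ofReal_lt_top)]
  refine integrable_congr ?_
  filter_upwards [hg0] with x hx
  rw [comp_apply, ENNReal.toReal_ofReal hx]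

end WithDensity

noncomputable def axisMeasure (gH gV : ℝ → ℝ) : Measure (ℝ × ℝ) :=
  (((volume.restrict (Ici 0)).withDensity fun u => ENNReal.ofReal (gH u)).map fun u => (u, 0))
    + (((volume.restrict (Ici 0)).withDensity fun v => ENNReal.ofReal (gV v)).map fun v => (0, v))

theorem integral_axisMeasure {E : Type*} [NormedAddCommGroup E] [NormedSpace ℝ E]
    {gH gV : ℝ → ℝ} (hgH : Measurable gH) (hgV : Measurable gV)
    (hgH0 : ∀ u ∈ Ici (0 : ℝ), 0 ≤ gH u) (hgV0 : ∀ v ∈ Ici (0 : ℝ), 0 ≤ gV v)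
    {f : ℝ × ℝ → E} (hf : StronglyMeasurable f)
    (hfH : IntegrableOn (fun u => gH u • f (u, 0)) (Ici 0))
    (hfV : IntegrableOn (fun v => gV v • f (0, v)) (Ici 0)) :
    ∫ z, f z ∂axisMeasure gH gV =
      (∫ u in Ici 0, gH u • f (u, 0)) + ∫ v in Ici 0, gV v • f (0, v) := by
  have hH0 := (ae_restrict_mem (μ := volume) measurableSet_Ici).mono hgH0
  have hV0 := (ae_restrict_mem (μ := volume) measurableSet_Ici).mono hgV0
  have hφH : Measurable fun u : ℝ => (u, (0 : ℝ)) := by fun_prop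
  have hφV : Measurable fun v : ℝ => ((0 : ℝ), v) := by fun_prop
  rw [axisMeasure, integral_add_measure
      ((integrable_map_withDensity_ofReal_iff hgH hH0 hφH hf).2 hfH)
      ((integrable_map_withDensity_ofReal_iff hgV hV0 hφV hf).2 hfV),
    integral_map_withDensity_ofReal hgH hH0 hφH hf,
    integral_map_withDensity_ofReal hgV hV0 hφV hf]

noncomputable def rescaledDensH (ε u : ℝ) : ℝ :=
  4 / π * u / (4 * ε ^ 2 + (u ^ 2 + ε ^ 2 - 1) ^ 2)

noncomputable def rescaledDensV (ε v : ℝ) : ℝ :=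
  4 / π * v / (4 * ε ^ 2 + (v ^ 2 + 1 - ε ^ 2) ^ 2)

theorem qdensH_one (ε u : ℝ) : qdensH 1 ε u = ε * rescaledDensH ε u := by
  unfold qdensH rescaledDensH; ring

theorem qdensV_one (ε v : ℝ) : qdensV 1 ε v = ε * rescaledDensV ε v := by
  unfold qdensV rescaledDensV; ring

theorem Qmeas_one_eq_axisMeasure {ε : ℝ} (hε : 0 < ε) :
    Qmeas (1, ε) =
      axisMeasure (fun u => ε * rescaledDensH ε u) fun v => ε * rescaledDensV ε v := by
  simp only [Qmeas, if_pos (And.intro one_pos hε), qdensH_one, qdensV_one]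
  rfl

theorem nuMeas_eq_axisMeasure : nuMeas = axisMeasure (rescaledDensH 0) (rescaledDensV 0) := by
  unfold nuMeas axisMeasure rescaledDensH rescaledDensV
  congr 6 <;> funext u <;> congr 2 <;> ring

theorem rescaledDensH_nonneg (ε : ℝ) {u : ℝ} (hu : 0 ≤ u) : 0 ≤ rescaledDensH ε u :=
  div_nonneg (mul_nonneg (by positivity) hu) (by positivity)

theorem rescaledDensV_nonneg (ε : ℝ) {v : ℝ} (hv : 0 ≤ v) : 0 ≤ rescaledDensV ε v :=
  div_nonneg (mul_nonneg (by positivity) hv) (by positivity)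

@[fun_prop]
theorem measurable_rescaledDensH (ε : ℝ) : Measurable (rescaledDensH ε) := by
  unfold rescaledDensH; fun_prop

@[fun_prop]
theorem measurable_rescaledDensV (ε : ℝ) : Measurable (rescaledDensV ε) := by
  unfold rescaledDensV; fun_prop

theorem continuousOn_rescaledDensH : ContinuousOn (uncurry rescaledDensH) {p | p.2 ^ 2 ≠ 1} := by
  refine ContinuousOn.div (by fun_prop) (by fun_prop) fun ⟨ε, u⟩ hu => ?_
  change 4 * ε ^ 2 + (u ^ 2 + ε ^ 2 - 1) ^ 2 ≠ 0
  rcases eq_or_ne ε 0 with rfl | hε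
  · simpa [sub_eq_zero] using hu
  · positivity

theorem continuous_rescaledDensV : Continuous (uncurry rescaledDensV) := by
  refine Continuous.div (by fun_prop) (by fun_prop) fun ⟨ε, v⟩ => ?_
  change 4 * ε ^ 2 + (v ^ 2 + 1 - ε ^ 2) ^ 2 ≠ 0
  rcases eq_or_ne ε 0 with rfl | hε
  · norm_num; positivity
  · positivity

section RescaledHarmonicMeasure

variable {f : ℝ × ℝ → ℝ}

noncomputable def rescaledHarmonicIntegral (f : ℝ × ℝ → ℝ) (ε : ℝ) : ℝ :=
  (∫ u in Ici 0, rescaledDensH ε u * f (u, 0)) + ∫ v in Ici 0, rescaledDensV ε v * f (0, v)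

/- `max u 0 = u` on the domain of integration, and the kernel `rescaledDensH ε (max u 0)` loses
the singularity of `rescaledDensH 0` at `u = -1`, where `f (u, 0)` need not vanish. -/
theorem continuousOn_rescaledDensH_max :
    ContinuousOn (uncurry fun ε u => rescaledDensH ε (max u 0)) {p | p.2 ≠ 1} := by
  refine continuousOn_rescaledDensH.comp (f := fun p : ℝ × ℝ => (p.1, max p.2 0))
    (by fun_prop) fun p (hp : p.2 ≠ 1) => ?_
  change max p.2 0 ^ 2 ≠ 1
  rcases le_total p.2 0 with h | h
  · simp [max_eq_right h]
  · rwa [max_eq_left h, Ne, pow_eq_one_iff_of_nonneg h two_ne_zero]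

theorem ne_one_of_mem_tsupport_comp_prodMk (hne : ((1 : ℝ), (0 : ℝ)) ∉ tsupport f) {u : ℝ}
    (hu : u ∈ tsupport fun u => f (u, 0)) : u ≠ 1 := by
  rintro rfl
  exact hne (tsupport_comp_subset_preimage (f := fun u : ℝ => (u, (0 : ℝ))) f (by fun_prop) hu)

theorem integrableOn_rescaledDensH_mul (hf : Continuous f) (hsupp : HasCompactSupport f)
    (hne : ((1 : ℝ), (0 : ℝ)) ∉ tsupport f) (ε : ℝ) :
    IntegrableOn (fun u => rescaledDensH ε u * f (u, 0)) (Ici 0) :=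
  IntegrableOn.congr_fun (integrable_mul_of_continuousOn_of_tsupport _
    (isOpen_ne_fun continuous_snd continuous_const)
    continuousOn_rescaledDensH_max (by fun_prop) (hsupp.comp_prodMkLeft 0)
    (fun _ _ hu => ne_one_of_mem_tsupport_comp_prodMk hne hu) ε)
    (fun u (hu : 0 ≤ u) => by rw [max_eq_left hu]) measurableSet_Ici

theorem continuous_integral_rescaledDensH_mul (hf : Continuous f) (hsupp : HasCompactSupport f)
    (hne : ((1 : ℝ), (0 : ℝ)) ∉ tsupport f) :
    Continuous fun ε => ∫ u in Ici 0, rescaledDensH ε u * f (u, 0) :=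
  (continuous_integral_mul_of_continuousOn_of_tsupport _
    (isOpen_ne_fun continuous_snd continuous_const) continuousOn_rescaledDensH_max (by fun_prop)
    (hsupp.comp_prodMkLeft 0) fun _ _ hu => ne_one_of_mem_tsupport_comp_prodMk hne hu).congr
    fun _ => setIntegral_congr_fun measurableSet_Ici fun u (hu : 0 ≤ u) => by rw [max_eq_left hu]

theorem integrableOn_rescaledDensV_mul (hf : Continuous f) (hsupp : HasCompactSupport f)
    (ε : ℝ) : IntegrableOn (fun v => rescaledDensV ε v * f (0, v)) (Ici 0) :=
  integrable_mul_of_continuousOn_of_tsupport _ isOpen_univ continuous_rescaledDensV.continuousOn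
    (by fun_prop) (hsupp.comp_prodMkRight 0) (fun _ _ _ => mem_univ _) ε

theorem continuous_integral_rescaledDensV_mul (hf : Continuous f) (hsupp : HasCompactSupport f) :
    Continuous fun ε => ∫ v in Ici 0, rescaledDensV ε v * f (0, v) :=
  continuous_integral_mul_of_continuousOn_of_tsupport _ isOpen_univ
    continuous_rescaledDensV.continuousOn (by fun_prop) (hsupp.comp_prodMkRight 0)
    fun _ _ _ => mem_univ _

theorem continuous_rescaledHarmonicIntegral (hf : Continuous f) (hsupp : HasCompactSupport f)
    (hne : ((1 : ℝ), (0 : ℝ)) ∉ tsupport f) : Continuous (rescaledHarmonicIntegral f) :=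
  (continuous_integral_rescaledDensH_mul hf hsupp hne).add
    (continuous_integral_rescaledDensV_mul hf hsupp)

theorem integral_Qmeas_one (hf : Continuous f) (hsupp : HasCompactSupport f)
    (hne : ((1 : ℝ), (0 : ℝ)) ∉ tsupport f) {ε : ℝ} (hε : 0 < ε) :
    ∫ z, f z ∂Qmeas (1, ε) = ε * rescaledHarmonicIntegral f ε := by
  rw [Qmeas_one_eq_axisMeasure hε, integral_axisMeasure (by fun_prop) (by fun_prop)
    (fun u hu => mul_nonneg hε.le (rescaledDensH_nonneg ε hu))
    (fun v hv => mul_nonneg hε.le (rescaledDensV_nonneg ε hv)) hf.stronglyMeasurable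
    (by simp only [smul_eq_mul, mul_assoc]
        exact (integrableOn_rescaledDensH_mul hf hsupp hne ε).const_mul ε)
    (by simp only [smul_eq_mul, mul_assoc]
        exact (integrableOn_rescaledDensV_mul hf hsupp ε).const_mul ε)]
  simp only [rescaledHarmonicIntegral, smul_eq_mul, mul_assoc, integral_const_mul, mul_add]

theorem integral_nuMeas (hf : Continuous f) (hsupp : HasCompactSupport f)
    (hne : ((1 : ℝ), (0 : ℝ)) ∉ tsupport f) :
    ∫ z, f z ∂nuMeas = rescaledHarmonicIntegral f 0 := by
  rw [nuMeas_eq_axisMeasure, integral_axisMeasure (measurable_rescaledDensH 0)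
    (measurable_rescaledDensV 0) (fun _ => rescaledDensH_nonneg 0)
    (fun _ => rescaledDensV_nonneg 0) hf.stronglyMeasurable
    (integrableOn_rescaledDensH_mul hf hsupp hne 0) (integrableOn_rescaledDensV_mul hf hsupp 0)]
  rfl

end RescaledHarmonicMeasure

/-- vague convergence `ε⁻¹ Q_(1,ε) → ν` on `E ∖ {(1,0)}` as `ε ↓ 0`: for every
continuous `f` with compact support avoiding `(1,0)`,
`lim_{ε↓0} ε⁻¹ ∫_E f dQ_(1,ε) = ∫_E f dν`. -/
theorem rescaled_harmonic_measure_vague_limit (f : ℝ × ℝ → ℝ) (hf : Continuous f)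
    (hsupp : HasCompactSupport f) (hne : ((1 : ℝ), (0 : ℝ)) ∉ tsupport f) :
    Tendsto (fun ε : ℝ => ε⁻¹ * ∫ z, f z ∂(Qmeas (1, ε))) (𝓝[>] 0)
      (𝓝 (∫ z, f z ∂nuMeas)) := by
  rw [integral_nuMeas hf hsupp hne]
  refine ((continuous_rescaledHarmonicIntegral hf hsupp hne).tendsto 0).mono_left
    nhdsWithin_le_nhds |>.congr' ?_
  filter_upwards [self_mem_nhdsWithin] with ε (hε : 0 < ε)
  rw [integral_Qmeas_one hf hsupp hne hε, inv_mul_cancel_left₀ hε.ne']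
end

section
/- Let f ∈ C_l²(E), let e₁ = (1,0) and e₂ = (0,1). Then for every x ∈ E and every i ∈ {1,2}, the integral defining G_i f(x) is well defined (the integrand is ν-integrable) and lim_{ε↓0} ε^{−1} ( ∫_E f dQ_{x + ε e_i} − f(x) ) = G_i f(x). -/
open MeasureTheory ProbabilityTheory Filter Set
open scoped ENNReal NNReal Topology

open MeasureTheory Filter Set
open scoped Topology

/-!
Along an axis, in the direction of that axis, `x + ε eᵢ` stays on `E`, `Q` is a Dirac mass
and the limit is the one-sided derivative. The substantial case is `x = (u, 0)`, `u > 0`, in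
direction `e₂`; the case `x = (0, v)` in direction `e₁` is its mirror image under swapping the
coordinates.

The densities of `Q_{(u,ε)}` are differences of a half-plane Poisson kernel and its mirror
image, so `Q_{(u,ε)}` is a probability measure whose first coordinate has mean `u`. Hence
`∫ f dQ_{(u,ε)} - f (u, 0)` is the `Q_{(u,ε)}`-integral of the Taylor remainder
`f z - f (u, 0) - (z₁ - u) ∂₁f(u)`. After the substitution `z = u y`, `ε⁻¹` times the rescaled
densities converge to `u⁻¹` times the densities of `ν`, and are dominated by (twice) them.
The remainder is `O((y₁ - 1)²)` near `(1, 0)` and bounded by `O(1 + y₁)` elsewhere, which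
makes it `ν`-integrable, and dominated convergence yields `G₂ f (u, 0)`.
-/

theorem ContinuousOn.exists_norm_le_of_tendsto_atTop {V : Type*} [NormedAddCommGroup V]
    {g : ℝ → V} {a : ℝ} {L : V} (hg : ContinuousOn g (Ici a)) (hL : Tendsto g atTop (𝓝 L)) :
    ∃ C, ∀ s ∈ Ici a, ‖g s‖ ≤ C := by
  obtain ⟨M, hM⟩ := (eventually_atTop.1 (hL.norm.eventually (eventually_le_nhds
    (lt_add_one ‖L‖))))
  obtain ⟨C, hC⟩ := isCompact_Icc.exists_bound_of_continuousOn
    (hg.mono (Icc_subset_Ici_self : Icc a M ⊆ Ici a))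
  refine ⟨max C (‖L‖ + 1), fun s hs => ?_⟩
  rcases le_total s M with hsM | hMs
  exacts [(hC s ⟨hs, hsM⟩).trans (le_max_left _ _), (hM s hMs).trans (le_max_right _ _)]

theorem Convex.norm_image_sub_sub_deriv_le {V : Type*} [NormedAddCommGroup V] [NormedSpace ℝ V]
    {φ φ' φ'' : ℝ → V} {s : Set ℝ} {C a b : ℝ} (hs : Convex ℝ s)
    (hφ : ∀ t ∈ s, HasDerivWithinAt φ (φ' t) s t)
    (hφ' : ∀ t ∈ s, HasDerivWithinAt φ' (φ'' t) s t) (hC : ∀ t ∈ s, ‖φ'' t‖ ≤ C)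
    (ha : a ∈ s) (hb : b ∈ s) :
    ‖φ b - φ a - (b - a) • φ' a‖ ≤ C * (b - a) ^ 2 := by
  have hsub : uIcc a b ⊆ s := hs.ordConnected.uIcc_subset ha hb
  have hremainder : ∀ t ∈ uIcc a b, HasDerivWithinAt (fun t => φ t - (t - a) • φ' a)
      (φ' t - φ' a) (uIcc a b) t := fun t ht => by
    simpa using ((hφ t (hsub ht)).mono hsub).fun_sub
      (((hasDerivAt_id' t).sub_const a).smul_const (φ' a)).hasDerivWithinAt
  have hC0 : 0 ≤ C := (norm_nonneg _).trans (hC a ha)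
  have hbound : ∀ t ∈ uIcc a b, ‖φ' t - φ' a‖ ≤ C * |b - a| := fun t ht =>
    (hs.norm_image_sub_le_of_norm_hasDerivWithin_le hφ' hC ha (hsub ht)).trans
      (mul_le_mul_of_nonneg_left (abs_sub_left_of_mem_uIcc ht) hC0)
  have := (convex_uIcc a b).norm_image_sub_le_of_norm_hasDerivWithin_le hremainder hbound
    left_mem_uIcc right_mem_uIcc
  simp only [sub_self, zero_smul, sub_zero, Real.norm_eq_abs] at this
  rwa [mul_assoc, ← sq, sq_abs, sub_right_comm] at this

theorem HasDerivWithinAt.tendsto_slope_zero_right_of_Ici {V : Type*} [NormedAddCommGroup V]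
    [NormedSpace ℝ V] {φ : ℝ → V} {φ' : V} {a u : ℝ} (h : HasDerivWithinAt φ φ' (Ici a) u)
    (hu : a ≤ u) : Tendsto (fun t => t⁻¹ • (φ (u + t) - φ u)) (𝓝[>] 0) (𝓝 φ') := by
  have hslope := (hasDerivWithinAt_iff_tendsto_slope' (lt_irrefl u)).1
    (h.mono (Ici_subset_Ici.2 hu)).Ioi_of_Ici
  have hshift : Tendsto (fun t => u + t) (𝓝[>] 0) (𝓝[>] u) :=
    tendsto_nhdsWithin_of_tendsto_nhds_of_eventually_within _
      ((continuous_const_add u).tendsto' 0 u (add_zero u) |>.mono_left nhdsWithin_le_nhds)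
      (eventually_nhdsWithin_of_forall fun t ht => lt_add_of_pos_right u ht)
  simpa [Function.comp_def, slope_def_module] using hslope.comp hshift

theorem inv_add_sub_inv_add_le {A B c : ℝ} (hA : 0 < A) (hAB : A ≤ B) (hc : 0 ≤ c) :
    (A + c)⁻¹ - (B + c)⁻¹ ≤ A⁻¹ - B⁻¹ := by
  have hB : 0 < B := hA.trans_le hAB
  rw [inv_sub_inv (by positivity) (by positivity), inv_sub_inv hA.ne' hB.ne',
    add_sub_add_right_eq_sub]
  exact div_le_div_of_nonneg_left (sub_nonneg.2 hAB) (by positivity) (by nlinarith)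

theorem integrableOn_Ioi_of_norm_le_inv_one_add_sq {V : Type*} [NormedAddCommGroup V]
    {g : ℝ → V} {c : ℝ} (hg : AEStronglyMeasurable g (volume.restrict (Ioi 0)))
    (hbound : ∀ s ∈ Ioi (0 : ℝ), ‖g s‖ ≤ c * (1 + s ^ 2)⁻¹) : IntegrableOn g (Ioi 0) :=
  (integrable_inv_one_add_sq.const_mul c).integrableOn.mono' hg
    ((ae_restrict_iff' measurableSet_Ioi).2 (Eventually.of_forall hbound))

theorem integral_Ioi_smul_eq_integral_comp_mul {V : Type*} [NormedAddCommGroup V]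
    [NormedSpace ℝ V] {u : ℝ} (hu : 0 < u) (p : ℝ → ℝ) (g : ℝ → V) :
    ∫ s in Ioi 0, p s • g s = ∫ s in Ioi 0, (u * p (u * s)) • g (u * s) := by
  simp_rw [mul_smul]
  rw [integral_smul, integral_comp_mul_left_Ioi' (fun s => p s • g s) 0 hu, mul_zero]

theorem ofReal_mul_integral_smul {α : Type*} [MeasurableSpace α] {μ : Measure α} (c : ℝ)
    (p : α → ℝ) (g : α → ℂ) : (c : ℂ) * ∫ a, p a • g a ∂μ = ∫ a, (c * p a) • g a ∂μ := by
  rw [← Complex.real_smul, ← integral_smul]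
  simp_rw [smul_smul]

theorem tendsto_integral_smul_of_norm_le_mul {α ι V : Type*} [MeasurableSpace α] {μ : Measure α}
    [NormedAddCommGroup V] [NormedSpace ℝ V] {l : Filter ι} [l.IsCountablyGenerated]
    {K : ι → α → ℝ} {k : α → ℝ} {g : α → V} {C : ℝ}
    (hK : ∀ᶠ i in l, AEStronglyMeasurable (K i) μ) (hg : AEStronglyMeasurable g μ)
    (hle : ∀ᶠ i in l, ∀ᵐ a ∂μ, ‖K i a‖ ≤ C * ‖k a‖) (hint : Integrable (fun a => k a • g a) μ)
    (hlim : ∀ᵐ a ∂μ, Tendsto (fun i => K i a) l (𝓝 (k a))) :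
    Tendsto (fun i => ∫ a, K i a • g a ∂μ) l (𝓝 (∫ a, k a • g a ∂μ)) :=
  tendsto_integral_filter_of_dominated_convergence (fun a => C * ‖k a • g a‖)
    (hK.mono fun _ hi => hi.smul hg)
    (hle.mono fun _ hi => hi.mono fun a ha => by
      rw [norm_smul, norm_smul, ← mul_assoc]
      exact mul_le_mul_of_nonneg_right ha (norm_nonneg _))
    (hint.norm.const_mul C) (hlim.mono fun a ha => ha.smul_const (g a))

namespace QuadrantHarmonicMeasure

open Real

noncomputable def axisMeasure (p q : ℝ → ℝ) : Measure (ℝ × ℝ) :=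
  (((volume.restrict (Ici (0 : ℝ))).withDensity fun s => ENNReal.ofReal (p s)).map
      fun s : ℝ => (s, (0 : ℝ)))
    + (((volume.restrict (Ici (0 : ℝ))).withDensity fun s => ENNReal.ofReal (q s)).map
      fun s : ℝ => ((0 : ℝ), s))

section AxisMeasure

variable {V : Type*} [NormedAddCommGroup V] [NormedSpace ℝ V] {p q : ℝ → ℝ}

theorem integrable_withDensity_ofReal_iff (hp : Measurable p) (hp0 : ∀ s ∈ Ioi 0, 0 ≤ p s)
    (G : ℝ → V) :
    Integrable G ((volume.restrict (Ici (0 : ℝ))).withDensity fun s => ENNReal.ofReal (p s)) ↔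
      IntegrableOn (fun s => p s • G s) (Ioi 0) := by
  rw [show (fun s => ENNReal.ofReal (p s)) = fun s => ((p s).toNNReal : ℝ≥0∞) from rfl,
    integrable_withDensity_iff_integrable_smul hp.real_toNNReal,
    ← integrableOn_Ici_iff_integrableOn_Ioi]
  refine integrable_congr ?_
  rw [← Measure.restrict_congr_set Ioi_ae_eq_Ici]
  filter_upwards [ae_restrict_mem measurableSet_Ioi] with s hs
  rw [NNReal.smul_def, Real.coe_toNNReal _ (hp0 s hs)]

theorem integral_withDensity_ofReal (hp : Measurable p) (hp0 : ∀ s ∈ Ioi 0, 0 ≤ p s)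
    (G : ℝ → V) :
    ∫ s, G s ∂((volume.restrict (Ici (0 : ℝ))).withDensity fun s => ENNReal.ofReal (p s)) =
      ∫ s in Ioi 0, p s • G s := by
  rw [show (fun s => ENNReal.ofReal (p s)) = fun s => ((p s).toNNReal : ℝ≥0∞) from rfl,
    integral_withDensity_eq_integral_smul hp.real_toNNReal, ← integral_Ici_eq_integral_Ioi,
    ← Measure.restrict_congr_set Ioi_ae_eq_Ici]
  refine integral_congr_ae ?_
  filter_upwards [ae_restrict_mem measurableSet_Ioi] with s hs
  rw [NNReal.smul_def, Real.coe_toNNReal _ (hp0 s hs)]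

theorem integrable_axisMeasure_iff (hp : Measurable p) (hq : Measurable q)
    (hp0 : ∀ s ∈ Ioi 0, 0 ≤ p s) (hq0 : ∀ s ∈ Ioi 0, 0 ≤ q s) (F : ℝ × ℝ → V) :
    Integrable F (axisMeasure p q) ↔
      IntegrableOn (fun s => p s • F (s, 0)) (Ioi 0) ∧
        IntegrableOn (fun s => q s • F (0, s)) (Ioi 0) := by
  rw [axisMeasure, integrable_add_measure,
    (measurableEmbedding_prod_mk_right 0).integrable_map_iff,
    (measurableEmbedding_prodMk_left 0).integrable_map_iff,
    integrable_withDensity_ofReal_iff hp hp0, integrable_withDensity_ofReal_iff hq hq0]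
  rfl

theorem integral_axisMeasure (hp : Measurable p) (hq : Measurable q)
    (hp0 : ∀ s ∈ Ioi 0, 0 ≤ p s) (hq0 : ∀ s ∈ Ioi 0, 0 ≤ q s) {F : ℝ × ℝ → V}
    (hF : Integrable F (axisMeasure p q)) :
    ∫ z, F z ∂(axisMeasure p q) =
      (∫ s in Ioi 0, p s • F (s, 0)) + ∫ s in Ioi 0, q s • F (0, s) := by
  rw [axisMeasure, integral_add_measure, (measurableEmbedding_prod_mk_right 0).integral_map,
    (measurableEmbedding_prodMk_left 0).integral_map,
    integral_withDensity_ofReal hp hp0, integral_withDensity_ofReal hq hq0]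
  · exact (integrable_add_measure.1 hF).1
  · exact (integrable_add_measure.1 hF).2

end AxisMeasure

theorem axisMeasure_univ {p q : ℝ → ℝ} (hp0 : ∀ s ∈ Ioi 0, 0 ≤ p s)
    (hq0 : ∀ s ∈ Ioi 0, 0 ≤ q s) (hpi : IntegrableOn p (Ioi 0)) (hqi : IntegrableOn q (Ioi 0)) :
    axisMeasure p q univ = ENNReal.ofReal ((∫ s in Ioi 0, p s) + ∫ s in Ioi 0, q s) := by
  have hIci : volume.restrict (Ici (0 : ℝ)) = volume.restrict (Ioi 0) :=
    (Measure.restrict_congr_set Ioi_ae_eq_Ici).symm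
  rw [ENNReal.ofReal_add (setIntegral_nonneg measurableSet_Ioi hp0)
      (setIntegral_nonneg measurableSet_Ioi hq0),
    ofReal_integral_eq_lintegral_ofReal hpi (ae_restrict_of_forall_mem measurableSet_Ioi hp0),
    ofReal_integral_eq_lintegral_ofReal hqi (ae_restrict_of_forall_mem measurableSet_Ioi hq0),
    axisMeasure, Measure.add_apply, Measure.map_apply (by fun_prop) MeasurableSet.univ,
    Measure.map_apply (by fun_prop) MeasurableSet.univ]
  simp only [preimage_univ, withDensity_apply _ MeasurableSet.univ, Measure.restrict_univ, hIci]

theorem axisMeasure_map_swap (p q : ℝ → ℝ) :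
    (axisMeasure p q).map Prod.swap = axisMeasure q p := by
  rw [axisMeasure, Measure.map_add _ _ measurable_swap,
    Measure.map_map measurable_swap (by fun_prop), Measure.map_map measurable_swap (by fun_prop),
    axisMeasure, add_comm]
  rfl

/-- The Poisson kernel of the upper half-plane at `a + ib` minus the one at its mirror
image `-a + ib`. -/
noncomputable def imageKernel (a b s : ℝ) : ℝ :=
  b / π * (((s - a) ^ 2 + b ^ 2)⁻¹ - ((s + a) ^ 2 + b ^ 2)⁻¹)

section ImageKernel

variable {a b : ℝ}

theorem imageKernel_nonneg (ha : 0 ≤ a) (hb : 0 < b) {s : ℝ} (hs : 0 ≤ s) :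
    0 ≤ imageKernel a b s := by
  unfold imageKernel
  have : ((s + a) ^ 2 + b ^ 2)⁻¹ ≤ ((s - a) ^ 2 + b ^ 2)⁻¹ :=
    inv_anti₀ (by positivity) (by nlinarith [mul_nonneg ha hs])
  have := pi_pos
  have : 0 ≤ b / π := by positivity
  nlinarith

theorem hasDerivAt_arctan_sub_div (hb : 0 < b) (c s : ℝ) :
    HasDerivAt (fun t => arctan ((t - c) / b)) (b / ((s - c) ^ 2 + b ^ 2)) s := by
  refine (((hasDerivAt_id' s).sub_const c).div_const b).arctan.congr_deriv ?_
  field_simp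
  ring

theorem hasDerivAt_half_log_sub_sq_add (hb : 0 < b) (c s : ℝ) :
    HasDerivAt (fun t => log ((t - c) ^ 2 + b ^ 2) / 2) ((s - c) / ((s - c) ^ 2 + b ^ 2)) s := by
  have hpos : (s - c) ^ 2 + b ^ 2 ≠ 0 := by positivity
  have h := ((((hasDerivAt_id' s).sub_const c).fun_pow 2).add_const (b ^ 2)).log hpos
  refine (h.div_const 2).congr_deriv ?_
  norm_num
  field_simp

theorem tendsto_log_sq_add_sub_log_sq_add (hb : 0 < b) :
    Tendsto (fun s => log ((s - a) ^ 2 + b ^ 2) - log ((s + a) ^ 2 + b ^ 2)) atTop (𝓝 0) := by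
  have hratio : Tendsto
      (fun t : ℝ => ((1 - a * t) ^ 2 + (b * t) ^ 2) / ((1 + a * t) ^ 2 + (b * t) ^ 2))
      (𝓝 0) (𝓝 1) := by
    have : ContinuousAt (fun t : ℝ => ((1 - a * t) ^ 2 + (b * t) ^ 2) /
        ((1 + a * t) ^ 2 + (b * t) ^ 2)) 0 := by
      fun_prop (disch := norm_num)
    simpa using this.tendsto
  have hlog := ((continuousAt_log one_ne_zero).tendsto.comp hratio).comp tendsto_inv_atTop_zero
  rw [log_one] at hlog
  refine hlog.congr' ?_
  filter_upwards [eventually_gt_atTop 0] with s hs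
  have hA : (s - a) ^ 2 + b ^ 2 ≠ 0 := by positivity
  have hB : (s + a) ^ 2 + b ^ 2 ≠ 0 := by positivity
  rw [← log_div hA hB, Function.comp_apply, Function.comp_apply]
  congr 1
  field_simp

theorem hasDerivAt_imageKernel_primitive (hb : 0 < b) (s : ℝ) :
    HasDerivAt (fun t => (arctan ((t - a) / b) - arctan ((t - -a) / b)) / π)
      (imageKernel a b s) s := by
  refine (((hasDerivAt_arctan_sub_div hb a s).sub
    (hasDerivAt_arctan_sub_div hb (-a) s)).div_const π).congr_deriv ?_
  rw [imageKernel, sub_neg_eq_add]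
  ring

theorem hasDerivAt_imageKernel_moment_primitive (hb : 0 < b) (s : ℝ) :
    HasDerivAt (fun t => b / π * (log ((t - a) ^ 2 + b ^ 2) / 2 - log ((t - -a) ^ 2 + b ^ 2) / 2)
        + a / π * (arctan ((t - a) / b) + arctan ((t - -a) / b)))
      (s * imageKernel a b s) s := by
  refine ((((hasDerivAt_half_log_sub_sq_add hb a s).sub
    (hasDerivAt_half_log_sub_sq_add hb (-a) s)).const_mul (b / π)).add
    (((hasDerivAt_arctan_sub_div hb a s).add
    (hasDerivAt_arctan_sub_div hb (-a) s)).const_mul (a / π))).congr_deriv ?_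
  have hA : (s - a) ^ 2 + b ^ 2 ≠ 0 := by positivity
  have hB : (s + a) ^ 2 + b ^ 2 ≠ 0 := by positivity
  rw [imageKernel, sub_neg_eq_add]
  field_simp
  ring

theorem tendsto_arctan_sub_div_atTop (hb : 0 < b) (c : ℝ) :
    Tendsto (fun t => arctan ((t - c) / b)) atTop (𝓝 (π / 2)) :=
  (tendsto_arctan_atTop.mono_right nhdsWithin_le_nhds).comp
    ((tendsto_atTop_add_const_right _ _ tendsto_id).atTop_div_const hb)

theorem tendsto_imageKernel_primitive (hb : 0 < b) :
    Tendsto (fun t => (arctan ((t - a) / b) - arctan ((t - -a) / b)) / π) atTop (𝓝 0) := by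
  simpa using ((tendsto_arctan_sub_div_atTop hb a).sub
    (tendsto_arctan_sub_div_atTop hb (-a))).div_const π

theorem integrableOn_imageKernel (ha : 0 ≤ a) (hb : 0 < b) :
    IntegrableOn (imageKernel a b) (Ioi 0) :=
  integrableOn_Ioi_deriv_of_nonneg' (fun _ _ => hasDerivAt_imageKernel_primitive hb _)
    (fun _ hs => imageKernel_nonneg ha hb (le_of_lt hs)) (tendsto_imageKernel_primitive hb)

theorem integral_imageKernel (ha : 0 ≤ a) (hb : 0 < b) :
    ∫ s in Ioi 0, imageKernel a b s = 2 / π * arctan (a / b) := by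
  rw [integral_Ioi_of_hasDerivAt_of_nonneg' (fun _ _ => hasDerivAt_imageKernel_primitive hb _)
    (fun _ hs => imageKernel_nonneg ha hb (le_of_lt hs)) (tendsto_imageKernel_primitive hb)]
  simp only [zero_sub, sub_neg_eq_add, zero_add, neg_div, arctan_neg]
  ring

theorem tendsto_imageKernel_moment_primitive (hb : 0 < b) :
    Tendsto (fun t => b / π * (log ((t - a) ^ 2 + b ^ 2) / 2 - log ((t - -a) ^ 2 + b ^ 2) / 2)
        + a / π * (arctan ((t - a) / b) + arctan ((t - -a) / b))) atTop (𝓝 a) := by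
  have hlog := (tendsto_log_sq_add_sub_log_sq_add (a := a) hb).div_const 2
  have h := ((hlog.const_mul (b / π)).add (((tendsto_arctan_sub_div_atTop hb a).add
    (tendsto_arctan_sub_div_atTop hb (-a))).const_mul (a / π)))
  convert h using 2
  · simp only [sub_neg_eq_add]
    ring
  · have := pi_pos.ne'
    field_simp
    ring

theorem integrableOn_mul_imageKernel (ha : 0 ≤ a) (hb : 0 < b) :
    IntegrableOn (fun s => s * imageKernel a b s) (Ioi 0) :=
  integrableOn_Ioi_deriv_of_nonneg'
    (fun _ _ => hasDerivAt_imageKernel_moment_primitive hb _)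
    (fun _ hs => mul_nonneg (le_of_lt hs) (imageKernel_nonneg ha hb (le_of_lt hs)))
    (tendsto_imageKernel_moment_primitive hb)

theorem integral_mul_imageKernel (ha : 0 ≤ a) (hb : 0 < b) :
    ∫ s in Ioi 0, s * imageKernel a b s = a := by
  rw [integral_Ioi_of_hasDerivAt_of_nonneg'
    (fun _ _ => hasDerivAt_imageKernel_moment_primitive hb _)
    (fun _ hs => mul_nonneg (le_of_lt hs) (imageKernel_nonneg ha hb (le_of_lt hs)))
    (tendsto_imageKernel_moment_primitive hb)]
  simp only [zero_sub, sub_neg_eq_add, zero_add, neg_sq, neg_div, arctan_neg]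
  ring

end ImageKernel

theorem qdensH_eq_imageKernel {u v : ℝ} (hv : 0 < v) : qdensH u v = imageKernel u v := by
  ext s
  have hA : 0 < (s - u) ^ 2 + v ^ 2 := by positivity
  have hB : 0 < (s + u) ^ 2 + v ^ 2 := by positivity
  rw [qdensH, imageKernel, show 4 * u ^ 2 * v ^ 2 + (s ^ 2 + v ^ 2 - u ^ 2) ^ 2 =
    ((s - u) ^ 2 + v ^ 2) * ((s + u) ^ 2 + v ^ 2) by ring]
  field_simp
  ring

theorem qdensV_eq_imageKernel {u v : ℝ} (hu : 0 < u) : qdensV u v = imageKernel v u := by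
  ext s
  have hA : 0 < (s - v) ^ 2 + u ^ 2 := by positivity
  have hB : 0 < (s + v) ^ 2 + u ^ 2 := by positivity
  rw [qdensV, imageKernel, show 4 * u ^ 2 * v ^ 2 + (s ^ 2 + u ^ 2 - v ^ 2) ^ 2 =
    ((s - v) ^ 2 + u ^ 2) * ((s + v) ^ 2 + u ^ 2) by ring]
  field_simp
  ring

theorem qdensH_nonneg {u v s : ℝ} (hu : 0 ≤ u) (hv : 0 ≤ v) (hs : 0 ≤ s) :
    0 ≤ qdensH u v s := by
  unfold qdensH
  positivity

theorem qdensV_nonneg {u v s : ℝ} (hu : 0 ≤ u) (hv : 0 ≤ v) (hs : 0 ≤ s) :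
    0 ≤ qdensV u v s := by
  unfold qdensV
  positivity

theorem measurable_qdensH (u v : ℝ) : Measurable (qdensH u v) := by
  unfold qdensH
  fun_prop

theorem measurable_qdensV (u v : ℝ) : Measurable (qdensV u v) := by
  unfold qdensV
  fun_prop

theorem Qmeas_eq_axisMeasure {u v : ℝ} (hu : 0 < u) (hv : 0 < v) :
    Qmeas (u, v) = axisMeasure (qdensH u v) (qdensV u v) :=
  if_pos ⟨hu, hv⟩

theorem Qmeas_eq_dirac {x : ℝ × ℝ} (hx : x.1 = 0 ∨ x.2 = 0) : Qmeas x = Measure.dirac x := by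
  refine if_neg ?_
  rintro ⟨h1, h2⟩
  rcases hx with h | h
  exacts [h1.ne' h, h2.ne' h]

theorem Qmeas_map_swap (x : ℝ × ℝ) : (Qmeas x).map Prod.swap = Qmeas x.swap := by
  obtain ⟨u, v⟩ := x
  by_cases hx : 0 < u ∧ 0 < v
  · rw [Prod.swap_prod_mk, Qmeas_eq_axisMeasure hx.1 hx.2, Qmeas_eq_axisMeasure hx.2 hx.1,
      axisMeasure_map_swap]
    congr 1 <;> ext s <;> simp only [qdensH, qdensV] <;> ring
  · rw [Prod.swap_prod_mk, Qmeas, if_neg hx, Measure.map_dirac' measurable_swap, Qmeas,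
      if_neg fun h => hx h.symm]
    rfl

theorem integral_Qmeas_swapF (f : ℝ × ℝ → ℂ) (x : ℝ × ℝ) :
    ∫ z, swapF f z ∂Qmeas x = ∫ z, f z ∂Qmeas x.swap := by
  have hswap : MeasurableEmbedding (Prod.swap : ℝ × ℝ → ℝ × ℝ) :=
    MeasurableEquiv.prodComm.measurableEmbedding
  rw [← Qmeas_map_swap, hswap.integral_map]
  rfl

theorem integral_qdensH {u v : ℝ} (hu : 0 ≤ u) (hv : 0 < v) :
    ∫ s in Ioi 0, qdensH u v s = 2 / π * arctan (u / v) := by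
  rw [qdensH_eq_imageKernel hv, integral_imageKernel hu hv]

theorem integral_qdensV {u v : ℝ} (hu : 0 < u) (hv : 0 ≤ v) :
    ∫ s in Ioi 0, qdensV u v s = 2 / π * arctan (v / u) := by
  rw [qdensV_eq_imageKernel hu, integral_imageKernel hv hu]

theorem isProbabilityMeasure_Qmeas (x : ℝ × ℝ) : IsProbabilityMeasure (Qmeas x) := by
  obtain ⟨u, v⟩ := x
  by_cases hx : 0 < u ∧ 0 < v
  · obtain ⟨hu, hv⟩ := hx
    constructor
    rw [Qmeas_eq_axisMeasure hu hv,
      axisMeasure_univ (fun _ hs => qdensH_nonneg hu.le hv.le (le_of_lt hs))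
      (fun _ hs => qdensV_nonneg hu.le hv.le (le_of_lt hs))
      (qdensH_eq_imageKernel hv ▸ integrableOn_imageKernel hu.le hv)
      (qdensV_eq_imageKernel hu ▸ integrableOn_imageKernel hv.le hu),
      integral_qdensH hu.le hv, integral_qdensV hu hv.le,
      ← inv_div u v, arctan_inv_of_pos (div_pos hu hv)]
    have := pi_pos.ne'
    field_simp
    simp
  · rw [Qmeas, if_neg hx]
    infer_instance

theorem integrable_fst_Qmeas {u v : ℝ} (hu : 0 < u) (hv : 0 < v) :
    Integrable Prod.fst (Qmeas (u, v)) := by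
  rw [Qmeas_eq_axisMeasure hu hv, integrable_axisMeasure_iff (measurable_qdensH u v)
    (measurable_qdensV u v) (fun _ hs => qdensH_nonneg hu.le hv.le (le_of_lt hs))
    (fun _ hs => qdensV_nonneg hu.le hv.le (le_of_lt hs))]
  simp only [smul_eq_mul, mul_zero, qdensH_eq_imageKernel hv, mul_comm (imageKernel u v _)]
  exact ⟨integrableOn_mul_imageKernel hu.le hv, integrableOn_zero⟩

theorem integral_fst_Qmeas {u v : ℝ} (hu : 0 < u) (hv : 0 < v) :
    ∫ z, z.1 ∂Qmeas (u, v) = u := by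
  have h := integrable_fst_Qmeas hu hv
  rw [Qmeas_eq_axisMeasure hu hv] at h ⊢
  rw [integral_axisMeasure (measurable_qdensH u v)
    (measurable_qdensV u v) (fun _ hs => qdensH_nonneg hu.le hv.le (le_of_lt hs))
    (fun _ hs => qdensV_nonneg hu.le hv.le (le_of_lt hs)) h]
  simp only [smul_eq_mul, mul_zero, integral_zero, add_zero, qdensH_eq_imageKernel hv,
    mul_comm (imageKernel u v _)]
  exact integral_mul_imageKernel hu.le hv

noncomputable def nuDensH (s : ℝ) : ℝ := 4 / π * s / ((1 - s) ^ 2 * (1 + s) ^ 2)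

noncomputable def nuDensV (s : ℝ) : ℝ := 4 / π * s / (1 + s ^ 2) ^ 2

theorem nuMeas_eq_axisMeasure : nuMeas = axisMeasure nuDensH nuDensV := rfl

theorem measurable_nuDensH : Measurable nuDensH := by
  unfold nuDensH
  fun_prop

theorem measurable_nuDensV : Measurable nuDensV := by
  unfold nuDensV
  fun_prop

theorem nuDensH_nonneg {s : ℝ} (hs : 0 ≤ s) : 0 ≤ nuDensH s := by
  unfold nuDensH
  positivity

theorem nuDensV_nonneg {s : ℝ} (hs : 0 ≤ s) : 0 ≤ nuDensV s := by
  unfold nuDensV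
  positivity

theorem nuDensV_le (s : ℝ) : nuDensV s ≤ 2 / π * (1 + s ^ 2)⁻¹ := by
  have := pi_pos
  rw [nuDensV, div_le_iff₀ (by positivity)]
  field_simp
  nlinarith [sq_nonneg (s - 1)]

/-- The factor `(s - 1) ^ 2` in the hypothesis cancels the non-integrable singularity of
`nuDensH` at `s = 1`. -/
theorem nuDensH_mul_le {s c M : ℝ} (hs : 0 ≤ s) (hc₀ : 0 ≤ c) (hM : 0 ≤ M)
    (hc : c * (1 + s) ≤ M * (s - 1) ^ 2) : nuDensH s * c ≤ 4 * M / π * (1 + s ^ 2)⁻¹ := by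
  have := pi_pos
  rcases eq_or_ne s 1 with rfl | hs₁
  · norm_num [nuDensH]
    positivity
  have hD : 0 < (1 - s) ^ 2 * (1 + s) ^ 2 := by
    have : 1 - s ≠ 0 := sub_ne_zero.2 (Ne.symm hs₁)
    positivity
  have hkey : s * c * (1 + s ^ 2) ≤ M * ((1 - s) ^ 2 * (1 + s) ^ 2) := by
    nlinarith [mul_le_mul_of_nonneg_right hc (sq_nonneg (1 + s)),
      mul_nonneg hc₀ (by positivity : (0 : ℝ) ≤ 1 + 2 * s + 3 * s ^ 2)]
  rw [← sub_nonneg]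
  have hsplit : 4 * M / π * (1 + s ^ 2)⁻¹ - nuDensH s * c =
      4 / π * (M * ((1 - s) ^ 2 * (1 + s) ^ 2) - s * c * (1 + s ^ 2)) /
        ((1 - s) ^ 2 * (1 + s) ^ 2 * (1 + s ^ 2)) := by
    rw [nuDensH]
    field_simp
  rw [hsplit]
  exact div_nonneg (mul_nonneg (by positivity) (by linarith)) (by positivity)

theorem inv_mul_nuDensH_eq {u : ℝ} (hu : 0 < u) {s : ℝ} (hs₀ : 0 ≤ s) (hs : s ≠ 1) :
    u⁻¹ * nuDensH s = u / π * (((u * s - u) ^ 2)⁻¹ - ((u * s + u) ^ 2)⁻¹) := by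
  have : s - 1 ≠ 0 := sub_ne_zero.2 hs
  have : 1 - s ≠ 0 := sub_ne_zero.2 (Ne.symm hs)
  have : 1 + s ≠ 0 := by positivity
  rw [nuDensH, show u * s - u = u * (s - 1) by ring, show u * s + u = u * (1 + s) by ring]
  field_simp
  ring

theorem inv_mul_nuDensV_eq {u : ℝ} (hu : 0 < u) (t : ℝ) :
    u⁻¹ * nuDensV t = 4 / π * u ^ 3 * t / ((u * t) ^ 2 + u ^ 2) ^ 2 := by
  rw [nuDensV]
  field_simp
  ring

theorem mem_Eset_swap {z : ℝ × ℝ} (hz : z ∈ Eset) : z.swap ∈ Eset :=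
  hz.symm.imp (fun h => ⟨h.2, h.1⟩) fun h => ⟨h.2, h.1⟩

variable {f : ℝ × ℝ → ℂ} {u : ℝ}

theorem _root_.MemCl2.swapF (hf : MemCl2 f) : MemCl2 (swapF f) := by
  obtain ⟨L, hL₁, hL₂⟩ := hf.limits
  obtain ⟨C, hC⟩ := hf.bdd2
  exact ⟨hf.contOn.comp continuous_swap.continuousOn fun _ => mem_Eset_swap, ⟨L, hL₂, hL₁⟩,
    hf.diff2, hf.diff1, hf.contd2, hf.contd1, hf.decay2, hf.decay1, hf.diff22, hf.diff11,
    ⟨C, fun r hr => (add_comm (‖deriv (d2 f) r‖) _ ▸ hC r hr)⟩⟩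

theorem _root_.MemCl2.continuousOn_horizontal (hf : MemCl2 f) :
    ContinuousOn (fun s => f (s, 0)) (Ici 0) :=
  hf.contOn.comp (by fun_prop) fun _ hs => Or.inl ⟨hs, rfl⟩

theorem _root_.MemCl2.continuousOn_vertical (hf : MemCl2 f) :
    ContinuousOn (fun s => f (0, s)) (Ici 0) :=
  hf.contOn.comp (by fun_prop) fun _ hs => Or.inr ⟨rfl, hs⟩

theorem _root_.MemCl2.exists_norm_le (hf : MemCl2 f) : ∃ C, ∀ z ∈ Eset, ‖f z‖ ≤ C := by
  obtain ⟨L, hL₁, hL₂⟩ := hf.limits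
  obtain ⟨C₁, hC₁⟩ := hf.continuousOn_horizontal.exists_norm_le_of_tendsto_atTop hL₁
  obtain ⟨C₂, hC₂⟩ := hf.continuousOn_vertical.exists_norm_le_of_tendsto_atTop hL₂
  refine ⟨max C₁ C₂, ?_⟩
  rintro ⟨s, t⟩ (⟨hs, rfl⟩ | ⟨rfl, ht⟩)
  exacts [(hC₁ s hs).trans (le_max_left _ _), (hC₂ t ht).trans (le_max_right _ _)]

theorem _root_.MemCl2.hasDerivAt_horizontal (hf : MemCl2 f) (hu : 0 < u) :
    HasDerivAt (fun s => f (s, 0)) (d1 f u) u :=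
  (hf.diff1 u hu.le).hasDerivWithinAt.hasDerivAt (Ici_mem_nhds hu)

theorem _root_.MemCl2.exists_taylor_bound (hf : MemCl2 f) (hu : 0 < u) :
    ∃ K, ∀ v ∈ Icc (u / 2) (3 * u / 2),
      ‖f (v, 0) - f (u, 0) - ((v - u : ℝ) : ℂ) * d1 f u‖ ≤ K * (v - u) ^ 2 := by
  obtain ⟨C, hC⟩ := hf.bdd2
  have hpos : ∀ t ∈ Icc (u / 2) (3 * u / 2), 0 < t := fun t ht => by linarith [ht.1]
  refine ⟨2 * C / u, fun v hv => ?_⟩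
  have h := (convex_Icc (u / 2) (3 * u / 2)).norm_image_sub_sub_deriv_le
    (φ := fun s => f (s, 0)) (φ' := d1 f) (φ'' := deriv (d1 f)) (C := 2 * C / u)
    (fun t ht => (hf.hasDerivAt_horizontal (hpos t ht)).hasDerivWithinAt)
    (fun t ht => (hf.diff11 t (hpos t ht)).hasDerivAt.hasDerivWithinAt) (fun t ht => ?_)
    (⟨by linarith, by linarith⟩ : u ∈ Icc (u / 2) (3 * u / 2)) hv
  · rwa [Complex.real_smul] at h
  · have h1 : t * ‖deriv (d1 f) t‖ ≤ C := by
      nlinarith [hC t (hpos t ht), mul_nonneg (hpos t ht).le (norm_nonneg (deriv (d2 f) t))]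
    rw [le_div_iff₀ hu]
    nlinarith [ht.1, norm_nonneg (deriv (d1 f) t)]

noncomputable def compensated (f : ℝ × ℝ → ℂ) (u : ℝ) (z : ℝ × ℝ) : ℂ :=
  f z - f (u, 0) - ((z.1 - u : ℝ) : ℂ) * d1 f u

theorem norm_compensated_le {C : ℝ} (hC : ∀ z ∈ Eset, ‖f z‖ ≤ C) (hu : 0 ≤ u) {z : ℝ × ℝ}
    (hz : z ∈ Eset) : ‖compensated f u z‖ ≤ 2 * C + |z.1 - u| * ‖d1 f u‖ := by
  have hfz := hC z hz
  have hfu := hC (u, 0) (Or.inl ⟨hu, rfl⟩)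
  calc ‖compensated f u z‖ ≤ ‖f z‖ + ‖f (u, 0)‖ + ‖((z.1 - u : ℝ) : ℂ) * d1 f u‖ :=
        (norm_sub_le _ _).trans (by gcongr; exact norm_sub_le _ _)
    _ ≤ 2 * C + |z.1 - u| * ‖d1 f u‖ := by
        rw [norm_mul, Complex.norm_real, Real.norm_eq_abs]
        linarith

theorem _root_.MemCl2.exists_norm_compensated_mul_le (hf : MemCl2 f) (hu : 0 < u) :
    ∃ M, 0 ≤ M ∧ ∀ s, 0 ≤ s → ‖compensated f u (u * s, 0)‖ * (1 + s) ≤ M * (s - 1) ^ 2 := by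
  obtain ⟨C, hC⟩ := hf.exists_norm_le
  obtain ⟨K, hK⟩ := hf.exists_taylor_bound hu
  have hC0 : 0 ≤ C :=
    (norm_nonneg _).trans (hC _ (Or.inl ⟨le_rfl, rfl⟩ : ((0 : ℝ), (0 : ℝ)) ∈ Eset))
  set B := 4 * C + u * ‖d1 f u‖
  refine ⟨max K 0 * u ^ 2 * (5 / 2) + 5 * B, by positivity, fun s hs => ?_⟩
  have hglobal : ‖compensated f u (u * s, 0)‖ ≤ 2 * C + u * |s - 1| * ‖d1 f u‖ := by
    have := norm_compensated_le hC hu.le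
      (Or.inl ⟨mul_nonneg hu.le hs, rfl⟩ : (u * s, (0 : ℝ)) ∈ Eset)
    rwa [show u * s - u = u * (s - 1) by ring, abs_mul, abs_of_pos hu] at this
  have hfar_term : 0 ≤ 5 * B * (s - 1) ^ 2 := by positivity
  have hnear_term : 0 ≤ max K 0 * u ^ 2 * (5 / 2) * (s - 1) ^ 2 := by positivity
  rcases le_or_gt |s - 1| (1 / 2) with hnear | hfar
  · obtain ⟨hs₁, hs₂⟩ := abs_le.1 hnear
    have hloc : ‖compensated f u (u * s, 0)‖ ≤ max K 0 * u ^ 2 * (s - 1) ^ 2 := by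
      refine (hK (u * s) ⟨by nlinarith, by nlinarith⟩).trans ?_
      rw [show (u * s - u) ^ 2 = u ^ 2 * (s - 1) ^ 2 by ring, ← mul_assoc]
      gcongr
      exact le_max_left K 0
    nlinarith [mul_le_mul hloc (show 1 + s ≤ 5 / 2 by linarith) (by linarith)
      (mul_nonneg (mul_nonneg (le_max_right K 0) (sq_nonneg u)) (sq_nonneg (s - 1)))]
  · have hlin : ‖compensated f u (u * s, 0)‖ ≤ B * |s - 1| := by
      nlinarith [mul_le_mul_of_nonneg_left hfar.le hC0]
    have hsum : 1 + s ≤ 5 * |s - 1| := by linarith [le_abs_self (s - 1)]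
    have := mul_le_mul hlin hsum (by positivity) (by positivity)
    have hsq : B * |s - 1| * (5 * |s - 1|) = 5 * B * (s - 1) ^ 2 := by
      rw [← sq_abs (s - 1)]
      ring
    linarith

theorem _root_.MemCl2.continuousOn_compensated (hf : MemCl2 f) (u : ℝ) :
    ContinuousOn (compensated f u) Eset :=
  (hf.contOn.sub continuousOn_const).sub
    ((by fun_prop : Continuous fun z : ℝ × ℝ => ((z.1 - u : ℝ) : ℂ)).continuousOn.mul
      continuousOn_const)

theorem _root_.MemCl2.aestronglyMeasurable_compensated_horizontal (hf : MemCl2 f)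
    (hu : 0 ≤ u) :
    AEStronglyMeasurable (fun s => compensated f u (u * s, 0)) (volume.restrict (Ioi 0)) :=
  ((hf.continuousOn_compensated u).comp
    (by fun_prop : Continuous fun s : ℝ => (u * s, (0 : ℝ))).continuousOn
    fun _ hs => Or.inl ⟨mul_nonneg hu (le_of_lt hs), rfl⟩).aestronglyMeasurable
    measurableSet_Ioi

theorem _root_.MemCl2.aestronglyMeasurable_compensated_vertical (hf : MemCl2 f)
    (hu : 0 ≤ u) :
    AEStronglyMeasurable (fun s => compensated f u (0, u * s)) (volume.restrict (Ioi 0)) :=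
  ((hf.continuousOn_compensated u).comp
    (by fun_prop : Continuous fun s : ℝ => ((0 : ℝ), u * s)).continuousOn
    fun _ hs => Or.inr ⟨rfl, mul_nonneg hu (le_of_lt hs)⟩).aestronglyMeasurable
    measurableSet_Ioi

theorem _root_.MemCl2.integrableOn_nuDensH_smul_compensated (hf : MemCl2 f) (hu : 0 < u) :
    IntegrableOn (fun s => nuDensH s • compensated f u (u * s, 0)) (Ioi 0) := by
  obtain ⟨M, hM0, hM⟩ := hf.exists_norm_compensated_mul_le hu
  refine integrableOn_Ioi_of_norm_le_inv_one_add_sq (c := 4 * M / π)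
    (measurable_nuDensH.aestronglyMeasurable.smul
      (hf.aestronglyMeasurable_compensated_horizontal hu.le)) fun s hs => ?_
  rw [norm_smul, Real.norm_eq_abs, abs_of_nonneg (nuDensH_nonneg (le_of_lt hs))]
  exact nuDensH_mul_le (le_of_lt hs) (norm_nonneg _) hM0 (hM s (le_of_lt hs))

theorem _root_.MemCl2.integrableOn_nuDensV_smul_compensated (hf : MemCl2 f) (hu : 0 < u) :
    IntegrableOn (fun s => nuDensV s • compensated f u (0, u * s)) (Ioi 0) := by
  obtain ⟨C, hC⟩ := hf.exists_norm_le
  refine integrableOn_Ioi_of_norm_le_inv_one_add_sq (c := (2 * C + u * ‖d1 f u‖) * (2 / π))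
    (measurable_nuDensV.aestronglyMeasurable.smul
      (hf.aestronglyMeasurable_compensated_vertical hu.le)) fun s hs => ?_
  have hs₀ : 0 ≤ s := le_of_lt hs
  have hcomp : ‖compensated f u (0, u * s)‖ ≤ 2 * C + u * ‖d1 f u‖ := by
    have := norm_compensated_le hC hu.le
      (Or.inr ⟨rfl, mul_nonneg hu.le hs₀⟩ : ((0 : ℝ), u * s) ∈ Eset)
    rwa [zero_sub, abs_neg, abs_of_pos hu] at this
  rw [norm_smul, Real.norm_eq_abs, abs_of_nonneg (nuDensV_nonneg hs₀), mul_comm, mul_assoc]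
  exact mul_le_mul hcomp (nuDensV_le s) (nuDensV_nonneg hs₀)
    ((norm_nonneg _).trans hcomp)

theorem nuIntegrand_eq_compensated (f : ℝ × ℝ → ℂ) (u : ℝ) :
    (fun y : ℝ × ℝ => f (u • y) - f (u, 0) - ((u * (y.1 - 1) : ℝ) : ℂ) * d1 f u) =
      fun y => compensated f u (u • y) := by
  ext y
  simp only [compensated, Prod.smul_fst, smul_eq_mul, mul_sub, mul_one]

theorem _root_.MemCl2.integrable_nuIntegrand (hf : MemCl2 f) (hu : 0 < u) :
    Integrable (fun y : ℝ × ℝ => f (u • y) - f (u, 0) - ((u * (y.1 - 1) : ℝ) : ℂ) * d1 f u)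
      nuMeas := by
  rw [nuIntegrand_eq_compensated, nuMeas_eq_axisMeasure, integrable_axisMeasure_iff
    measurable_nuDensH measurable_nuDensV (fun _ hs => nuDensH_nonneg (le_of_lt hs))
    (fun _ hs => nuDensV_nonneg (le_of_lt hs))]
  simp only [Prod.smul_mk, smul_eq_mul, mul_zero]
  exact ⟨hf.integrableOn_nuDensH_smul_compensated hu, hf.integrableOn_nuDensV_smul_compensated hu⟩

theorem _root_.MemCl2.integrable_Qmeas (hf : MemCl2 f) {v : ℝ} (hu : 0 < u) (hv : 0 < v) :
    Integrable f (Qmeas (u, v)) := by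
  obtain ⟨C, hC⟩ := hf.exists_norm_le
  rw [Qmeas_eq_axisMeasure hu hv, integrable_axisMeasure_iff (measurable_qdensH u v)
    (measurable_qdensV u v) (fun _ hs => qdensH_nonneg hu.le hv.le (le_of_lt hs))
    (fun _ hs => qdensV_nonneg hu.le hv.le (le_of_lt hs)), qdensH_eq_imageKernel hv,
    qdensV_eq_imageKernel hu]
  exact ⟨(integrableOn_imageKernel hu.le hv).smul_bdd C
      ((hf.continuousOn_horizontal.mono Ioi_subset_Ici_self).aestronglyMeasurable
        measurableSet_Ioi)
      ((ae_restrict_iff' measurableSet_Ioi).2 (Eventually.of_forall fun s hs =>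
        hC _ (Or.inl ⟨le_of_lt hs, rfl⟩))),
    (integrableOn_imageKernel hv.le hu).smul_bdd C
      ((hf.continuousOn_vertical.mono Ioi_subset_Ici_self).aestronglyMeasurable
        measurableSet_Ioi)
      ((ae_restrict_iff' measurableSet_Ioi).2 (Eventually.of_forall fun s hs =>
        hC _ (Or.inr ⟨rfl, le_of_lt hs⟩)))⟩

theorem _root_.MemCl2.integrable_compensated_Qmeas (hf : MemCl2 f) {v : ℝ} (hu : 0 < u)
    (hv : 0 < v) : Integrable (compensated f u) (Qmeas (u, v)) :=
  have := isProbabilityMeasure_Qmeas (u, v)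
  ((hf.integrable_Qmeas hu hv).sub (integrable_const _)).sub
    (((integrable_fst_Qmeas hu hv).sub (integrable_const u)).ofReal.mul_const _)

theorem _root_.MemCl2.integral_Qmeas_sub_eq (hf : MemCl2 f) {v : ℝ} (hu : 0 < u) (hv : 0 < v) :
    (∫ z, f z ∂Qmeas (u, v)) - f (u, 0) = ∫ z, compensated f u z ∂Qmeas (u, v) := by
  have := isProbabilityMeasure_Qmeas (u, v)
  have hcentered : Integrable (fun z : ℝ × ℝ => z.1 - u) (Qmeas (u, v)) :=
    (integrable_fst_Qmeas hu hv).sub (integrable_const u)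
  have hconst : Integrable (fun z => f z - f (u, 0)) (Qmeas (u, v)) :=
    (hf.integrable_Qmeas hu hv).sub (integrable_const _)
  have hlin : Integrable (fun z : ℝ × ℝ => ((z.1 - u : ℝ) : ℂ) * d1 f u) (Qmeas (u, v)) :=
    hcentered.ofReal.mul_const _
  unfold compensated
  rw [integral_sub hconst hlin, integral_sub (hf.integrable_Qmeas hu hv) (integrable_const _),
    integral_mul_const, integral_complex_ofReal,
    integral_sub (integrable_fst_Qmeas hu hv) (integrable_const u), integral_fst_Qmeas hu hv]
  simp

noncomputable def rescaledQdensH (u ε s : ℝ) : ℝ := ε⁻¹ * (u * qdensH u ε (u * s))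

noncomputable def rescaledQdensV (u ε s : ℝ) : ℝ := ε⁻¹ * (u * qdensV u ε (u * s))

theorem measurable_rescaledQdensH (u ε : ℝ) : Measurable (rescaledQdensH u ε) :=
  (((measurable_qdensH u ε).comp (measurable_id.const_mul u)).const_mul u).const_mul ε⁻¹

theorem measurable_rescaledQdensV (u ε : ℝ) : Measurable (rescaledQdensV u ε) :=
  (((measurable_qdensV u ε).comp (measurable_id.const_mul u)).const_mul u).const_mul ε⁻¹

theorem rescaledQdensH_nonneg {ε s : ℝ} (hu : 0 ≤ u) (hε : 0 ≤ ε) (hs : 0 ≤ s) :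
    0 ≤ rescaledQdensH u ε s := by
  have := qdensH_nonneg hu hε (mul_nonneg hu hs)
  unfold rescaledQdensH
  positivity

theorem rescaledQdensV_nonneg {ε s : ℝ} (hu : 0 ≤ u) (hε : 0 ≤ ε) (hs : 0 ≤ s) :
    0 ≤ rescaledQdensV u ε s := by
  have := qdensV_nonneg hu hε (mul_nonneg hu hs)
  unfold rescaledQdensV
  positivity

theorem rescaledQdensH_eq {ε : ℝ} (hε : 0 < ε) (s : ℝ) :
    rescaledQdensH u ε s =
      u / π * (((u * s - u) ^ 2 + ε ^ 2)⁻¹ - ((u * s + u) ^ 2 + ε ^ 2)⁻¹) := by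
  rw [rescaledQdensH, qdensH_eq_imageKernel hε, imageKernel]
  field_simp

theorem rescaledQdensV_eq {ε : ℝ} (hε : ε ≠ 0) (s : ℝ) :
    rescaledQdensV u ε s =
      4 / π * u ^ 3 * s / (4 * u ^ 2 * ε ^ 2 + ((u * s) ^ 2 + u ^ 2 - ε ^ 2) ^ 2) := by
  rw [rescaledQdensV, qdensV]
  field_simp

theorem rescaledQdensH_le (hu : 0 < u) {ε s : ℝ} (hε : 0 < ε) (hs₀ : 0 ≤ s) (hs : s ≠ 1) :
    rescaledQdensH u ε s ≤ u⁻¹ * nuDensH s := by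
  have : 0 < (u * s - u) ^ 2 := by
    have : u * s - u ≠ 0 := by
      rw [show u * s - u = u * (s - 1) by ring]
      exact mul_ne_zero hu.ne' (sub_ne_zero.2 hs)
    positivity
  rw [rescaledQdensH_eq hε, inv_mul_nuDensH_eq hu hs₀ hs]
  exact mul_le_mul_of_nonneg_left (inv_add_sub_inv_add_le this
    (by nlinarith [mul_nonneg (mul_nonneg hu.le hu.le) hs₀]) (sq_nonneg ε))
    (div_nonneg hu.le pi_pos.le)

theorem rescaledQdensV_le (hu : 0 < u) {ε s : ℝ} (hε : 0 < ε) (hεu : ε ≤ u) (hs : 0 ≤ s) :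
    rescaledQdensV u ε s ≤ 2 * (u⁻¹ * nuDensV s) := by
  have := pi_pos
  have hX : 0 < (u * s) ^ 2 + u ^ 2 := by positivity
  have hD : ((u * s) ^ 2 + u ^ 2) ^ 2 / 2 ≤
      4 * u ^ 2 * ε ^ 2 + ((u * s) ^ 2 + u ^ 2 - ε ^ 2) ^ 2 := by
    nlinarith [mul_le_mul_of_nonneg_left (pow_le_pow_left₀ hε.le hεu 2) (sq_nonneg (u * s)),
      sq_nonneg ((u * s) ^ 2 - u ^ 2), sq_nonneg ε]
  rw [rescaledQdensV_eq hε.ne', inv_mul_nuDensV_eq hu]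
  calc _ ≤ 4 / π * u ^ 3 * s / (((u * s) ^ 2 + u ^ 2) ^ 2 / 2) :=
        div_le_div_of_nonneg_left (by positivity) (by positivity) hD
    _ = _ := by field_simp

theorem tendsto_rescaledQdensH (hu : 0 < u) {s : ℝ} (hs₀ : 0 ≤ s) (hs : s ≠ 1) :
    Tendsto (fun ε => rescaledQdensH u ε s) (𝓝[>] 0) (𝓝 (u⁻¹ * nuDensH s)) := by
  have hA : (u * s - u) ^ 2 ≠ 0 := by
    rw [show u * s - u = u * (s - 1) by ring]
    exact pow_ne_zero 2 (mul_ne_zero hu.ne' (sub_ne_zero.2 hs))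
  have hB : (u * s + u) ^ 2 ≠ 0 := by positivity
  have hcont : ContinuousAt (fun ε : ℝ =>
      u / π * (((u * s - u) ^ 2 + ε ^ 2)⁻¹ - ((u * s + u) ^ 2 + ε ^ 2)⁻¹)) 0 := by
    fun_prop (disch := simp [hA, hB])
  have hlim := hcont.tendsto
  simp only [ne_eq, OfNat.ofNat_ne_zero, not_false_eq_true, zero_pow, add_zero] at hlim
  rw [inv_mul_nuDensH_eq hu hs₀ hs]
  refine (hlim.mono_left nhdsWithin_le_nhds).congr' ?_
  filter_upwards [self_mem_nhdsWithin] with ε hε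
  exact (rescaledQdensH_eq hε s).symm

theorem tendsto_rescaledQdensV (hu : 0 < u) (s : ℝ) :
    Tendsto (fun ε => rescaledQdensV u ε s) (𝓝[>] 0) (𝓝 (u⁻¹ * nuDensV s)) := by
  have hD : ((u * s) ^ 2 + u ^ 2) ^ 2 ≠ 0 := by positivity
  have hcont : ContinuousAt (fun ε : ℝ =>
      4 / π * u ^ 3 * s / (4 * u ^ 2 * ε ^ 2 + ((u * s) ^ 2 + u ^ 2 - ε ^ 2) ^ 2)) 0 := by
    fun_prop (disch := simp [hD])
  have hlim := hcont.tendsto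
  simp only [ne_eq, OfNat.ofNat_ne_zero, not_false_eq_true, zero_pow, mul_zero, zero_add,
    sub_zero] at hlim
  rw [inv_mul_nuDensV_eq hu]
  refine (hlim.mono_left nhdsWithin_le_nhds).congr' ?_
  filter_upwards [self_mem_nhdsWithin] with ε hε
  exact (rescaledQdensV_eq (ne_of_gt hε) s).symm

theorem _root_.MemCl2.slope_eq_integral (hf : MemCl2 f) (hu : 0 < u) {ε : ℝ} (hε : 0 < ε) :
    (ε : ℂ)⁻¹ * ((∫ z, f z ∂Qmeas (u, ε)) - f (u, 0)) =
      (∫ s in Ioi 0, rescaledQdensH u ε s • compensated f u (u * s, 0)) +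
        ∫ s in Ioi 0, rescaledQdensV u ε s • compensated f u (0, u * s) := by
  have hint := hf.integrable_compensated_Qmeas hu hε
  rw [Qmeas_eq_axisMeasure hu hε] at hint
  rw [hf.integral_Qmeas_sub_eq hu hε, Qmeas_eq_axisMeasure hu hε,
    integral_axisMeasure (measurable_qdensH u ε) (measurable_qdensV u ε)
      (fun _ hs => qdensH_nonneg hu.le hε.le (le_of_lt hs))
      (fun _ hs => qdensV_nonneg hu.le hε.le (le_of_lt hs)) hint,
    integral_Ioi_smul_eq_integral_comp_mul hu (qdensH u ε),
    integral_Ioi_smul_eq_integral_comp_mul hu (qdensV u ε),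
    mul_add, ← Complex.ofReal_inv, ofReal_mul_integral_smul, ofReal_mul_integral_smul]
  rfl

theorem _root_.MemCl2.G2op_eq_integral (hf : MemCl2 f) (hu : 0 < u) :
    G2op f (u, 0) =
      (∫ s in Ioi 0, (u⁻¹ * nuDensH s) • compensated f u (u * s, 0)) +
        ∫ s in Ioi 0, (u⁻¹ * nuDensV s) • compensated f u (0, u * s) := by
  have hint := hf.integrable_nuIntegrand hu
  rw [nuIntegrand_eq_compensated, nuMeas_eq_axisMeasure] at hint
  rw [G2op, if_neg hu.ne']
  dsimp only
  rw [nuIntegrand_eq_compensated, nuMeas_eq_axisMeasure,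
    integral_axisMeasure measurable_nuDensH measurable_nuDensV
      (fun _ hs => nuDensH_nonneg (le_of_lt hs)) (fun _ hs => nuDensV_nonneg (le_of_lt hs)) hint,
    mul_add, ← Complex.ofReal_inv, ofReal_mul_integral_smul, ofReal_mul_integral_smul]
  simp only [Prod.smul_mk, smul_eq_mul, mul_zero]

theorem _root_.MemCl2.tendsto_integral_rescaledQdensH_smul (hf : MemCl2 f) (hu : 0 < u) :
    Tendsto (fun ε => ∫ s in Ioi 0, rescaledQdensH u ε s • compensated f u (u * s, 0))
      (𝓝[>] 0) (𝓝 (∫ s in Ioi 0, (u⁻¹ * nuDensH s) • compensated f u (u * s, 0))) := by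
  have hne : ∀ᵐ s ∂volume.restrict (Ioi (0 : ℝ)), s ∈ ({1}ᶜ : Set ℝ) :=
    ae_restrict_of_ae (compl_mem_ae_iff.2 (measure_singleton 1))
  refine tendsto_integral_smul_of_norm_le_mul (C := 1)
    (Eventually.of_forall fun ε => (measurable_rescaledQdensH u ε).aestronglyMeasurable)
    (hf.aestronglyMeasurable_compensated_horizontal hu.le) ?_
    (by simpa only [mul_smul, Pi.smul_def] using
      (hf.integrableOn_nuDensH_smul_compensated hu).smul u⁻¹) ?_
  · filter_upwards [self_mem_nhdsWithin] with ε (hε : 0 < ε)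
    filter_upwards [ae_restrict_mem measurableSet_Ioi, hne] with s (hs : 0 < s) hs₁
    have := nuDensH_nonneg hs.le
    rw [one_mul, Real.norm_of_nonneg (rescaledQdensH_nonneg hu.le hε.le hs.le),
      Real.norm_of_nonneg (by positivity)]
    exact rescaledQdensH_le hu hε hs.le hs₁
  · filter_upwards [ae_restrict_mem measurableSet_Ioi, hne] with s (hs : 0 < s) hs₁
    exact tendsto_rescaledQdensH hu hs.le hs₁

theorem _root_.MemCl2.tendsto_integral_rescaledQdensV_smul (hf : MemCl2 f) (hu : 0 < u) :
    Tendsto (fun ε => ∫ s in Ioi 0, rescaledQdensV u ε s • compensated f u (0, u * s))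
      (𝓝[>] 0) (𝓝 (∫ s in Ioi 0, (u⁻¹ * nuDensV s) • compensated f u (0, u * s))) := by
  refine tendsto_integral_smul_of_norm_le_mul (C := 2)
    (Eventually.of_forall fun ε => (measurable_rescaledQdensV u ε).aestronglyMeasurable)
    (hf.aestronglyMeasurable_compensated_vertical hu.le) ?_
    (by simpa only [mul_smul, Pi.smul_def] using
      (hf.integrableOn_nuDensV_smul_compensated hu).smul u⁻¹)
    (Eventually.of_forall fun s => tendsto_rescaledQdensV hu s)
  filter_upwards [Ioo_mem_nhdsGT hu] with ε ⟨hε, hεu⟩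
  filter_upwards [ae_restrict_mem measurableSet_Ioi] with s (hs : 0 < s)
  have := nuDensV_nonneg hs.le
  rw [Real.norm_of_nonneg (rescaledQdensV_nonneg hu.le hε.le hs.le),
    Real.norm_of_nonneg (by positivity)]
  exact rescaledQdensV_le hu hε hεu.le hs.le

theorem _root_.MemCl2.tendsto_slope_G2op (hf : MemCl2 f) (hu : 0 < u) :
    Tendsto (fun ε : ℝ => (ε : ℂ)⁻¹ * ((∫ z, f z ∂Qmeas (u, ε)) - f (u, 0)))
      (𝓝[>] 0) (𝓝 (G2op f (u, 0))) := by
  rw [hf.G2op_eq_integral hu]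
  refine ((hf.tendsto_integral_rescaledQdensH_smul hu).add
    (hf.tendsto_integral_rescaledQdensV_smul hu)).congr' ?_
  filter_upwards [self_mem_nhdsWithin] with ε hε using (hf.slope_eq_integral hu hε).symm

noncomputable def harmonicSlope (f : ℝ × ℝ → ℂ) (x d : ℝ × ℝ) (ε : ℝ) : ℂ :=
  (ε : ℂ)⁻¹ * ((∫ z, f z ∂Qmeas (x + ε • d)) - f x)

theorem harmonicSlope_swapF (x d : ℝ × ℝ) :
    harmonicSlope (swapF f) x d = harmonicSlope f x.swap d.swap := by
  ext ε
  rw [harmonicSlope, harmonicSlope, integral_Qmeas_swapF]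
  rfl

theorem _root_.MemCl2.tendsto_harmonicSlope_vertical (hf : MemCl2 f) {v : ℝ} (hv : 0 ≤ v) :
    Tendsto (harmonicSlope f (0, v) (0, 1)) (𝓝[>] 0) (𝓝 (d2 f v)) := by
  refine ((hf.diff2 v hv).hasDerivWithinAt.tendsto_slope_zero_right_of_Ici hv).congr fun ε => ?_
  rw [harmonicSlope, Qmeas_eq_dirac (Or.inl (by simp)), integral_dirac, Complex.real_smul,
    Complex.ofReal_inv]
  simp

theorem _root_.MemCl2.tendsto_harmonicSlope_G2op (hf : MemCl2 f) {x : ℝ × ℝ} (hx : x ∈ Eset) :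
    Tendsto (harmonicSlope f x (0, 1)) (𝓝[>] 0) (𝓝 (G2op f x)) := by
  obtain ⟨u, v⟩ := x
  rcases eq_or_ne u 0 with rfl | hu
  · rw [G2op, if_pos rfl]
    exact hf.tendsto_harmonicSlope_vertical (hx.elim (fun h => h.2.ge) fun h => h.2)
  · obtain ⟨hu₀, rfl⟩ : 0 ≤ u ∧ v = 0 := hx.resolve_right fun h => hu h.1
    refine (hf.tendsto_slope_G2op (hu₀.lt_of_ne' hu)).congr fun ε => ?_
    simp [harmonicSlope]

theorem _root_.MemCl2.integrable_nuIntegrand_of_mem (hf : MemCl2 f) {x : ℝ × ℝ} (hx : x ∈ Eset)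
    (hx₁ : x.1 ≠ 0) :
    Integrable (fun y : ℝ × ℝ => f (x.1 • y) - f x - ((x.1 * (y.1 - 1) : ℝ) : ℂ) * d1 f x.1)
      nuMeas := by
  obtain ⟨u, v⟩ := x
  obtain ⟨hu₀, rfl⟩ : 0 ≤ u ∧ v = 0 := hx.resolve_right fun h => hx₁ h.1
  exact hf.integrable_nuIntegrand (hu₀.lt_of_ne' hx₁)

end QuadrantHarmonicMeasure

open QuadrantHarmonicMeasure

/-- for `f ∈ C_l²(E)`, `x ∈ E` and `i ∈ {1,2}`, the integral defining
`G_i f(x)` is well defined (the integrand is `ν`-integrable) and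
`lim_{ε↓0} ε⁻¹(∫_E f dQ_{x+εe_i} − f(x)) = G_i f(x)`. -/
theorem generator_directional_limits (f : ℝ × ℝ → ℂ) (hf : MemCl2 f)
    (x : ℝ × ℝ) (hx : x ∈ Eset) :
    (x.1 ≠ 0 → Integrable (fun y : ℝ × ℝ =>
        f (x.1 • y) - f x - (((x.1 * (y.1 - 1)) : ℝ) : ℂ) * d1 f x.1) nuMeas) ∧
    (x.2 ≠ 0 → Integrable (fun y : ℝ × ℝ =>
        swapF f (x.2 • y) - swapF f (x.2, x.1)
          - (((x.2 * (y.1 - 1)) : ℝ) : ℂ) * d1 (swapF f) x.2) nuMeas) ∧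
    Tendsto (fun ε : ℝ => (ε : ℂ)⁻¹ *
        ((∫ z, f z ∂(Qmeas (x + ε • ((1 : ℝ), (0 : ℝ))))) - f x))
      (𝓝[>] 0) (𝓝 (G1op f x)) ∧
    Tendsto (fun ε : ℝ => (ε : ℂ)⁻¹ *
        ((∫ z, f z ∂(Qmeas (x + ε • ((0 : ℝ), (1 : ℝ))))) - f x))
      (𝓝[>] 0) (𝓝 (G2op f x)) := by
  have hG1 := hf.swapF.tendsto_harmonicSlope_G2op (mem_Eset_swap hx)
  rw [harmonicSlope_swapF] at hG1
  exact ⟨hf.integrable_nuIntegrand_of_mem hx, hf.swapF.integrable_nuIntegrand_of_mem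
    (mem_Eset_swap hx), hG1, hf.tendsto_harmonicSlope_G2op hx⟩
end
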